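/- arXiv:2604.23131 — 4 statements merged into one kernel-verified Lean document; each statement's English description precedes it below -/
import Mathlib

section
/- Let n, k be positive integers and G a graph on n vertices with minimum degree at least ⌊n/(k+1)⌋. Then G contains a path on at least ⌈n/k⌉ vertices. -/
open Finset List SimpleGraph

lemma listToWalk {V : Type*} (G : SimpleGraph V) :
    ∀ (l : List V) (h : l ≠ []), l.Chain' G.Adj →
      ∃ p : G.Walk (l.head h) (l.getLast h), p.support = l
  | [], h, _ => absurd rfl h
  | [a], _, _ => ⟨SimpleGraph.Walk.nil, rfl⟩
  | a :: b :: t, _, hc => by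
    obtain ⟨hab, hc'⟩ := List.isChain_cons_cons.mp hc
    obtain ⟨p, hp⟩ := listToWalk G (b :: t) (by simp) hc'
    exact ⟨SimpleGraph.Walk.cons hab (p.copy rfl (by simp [List.getLast_cons])), by
      exact congrArg (List.cons a) ((SimpleGraph.Walk.support_copy ..).trans hp)⟩

lemma crossEdge {V : Type*} (G : SimpleGraph V) (T : V → Prop) :
    ∀ {a b : V} (_ : G.Walk a b), ¬ T a → T b → ∃ y z, G.Adj y z ∧ ¬ T y ∧ T z := by
  intro a b w
  induction w with
  | nil => exact fun ha hb => absurd hb ha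
  | @cons u c b h w ih =>
    intro ha hb
    by_cases hc : T c
    · exact ⟨u, c, h, ha, hc⟩
    · exact ih hc hb

lemma chain'_rotate {V : Type*} {R : V → V → Prop} {c : List V} (hc : c.Chain' R)
    (hlast : ∀ (h : c ≠ []), R (c.getLast h) (c.head h)) (m : ℕ) :
    (c.rotate m).Chain' R := by
  rcases eq_or_ne c [] with rfl | hne
  · exact List.isChain_nil
  have hcc : (c ++ c).Chain' R := by
    simp only [List.Chain', List.isChain_append]
    refine ⟨hc, hc, ?_⟩
    intro x hx y hy
    rw [List.getLast?_eq_getLast hne] at hx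
    rw [List.head?_eq_head hne] at hy
    cases hx; cases hy; exact hlast hne
  have hm : m % c.length ≤ c.length := (Nat.mod_lt _ (by simpa using List.length_pos_iff.mpr hne)).le
  rw [← List.rotate_mod, List.rotate_eq_drop_append_take hm]
  refine hcc.infix ⟨c.take (m % c.length), c.drop (m % c.length), ?_⟩
  rw [← List.append_assoc, List.take_append_drop, List.append_assoc, List.take_append_drop]

lemma head_rotate {V : Type*} {c : List V} {m : ℕ} (hm : m < c.length) (h : (c.rotate m) ≠ []) :
    (c.rotate m).head h = c.get ⟨m, hm⟩ := by
  rw [List.head_eq_getElem_zero h, List.getElem_rotate]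
  simp [Nat.mod_eq_of_lt hm]

lemma card_adjIdx {V : Type*} [Fintype V] [DecidableEq V] (G : SimpleGraph V)
    [DecidableRel G.Adj] {l : List V} (hnd : l.Nodup) {z : V} (d : V)
    (hall : ∀ w, G.Adj z w → w ∈ l) :
    ((Finset.range l.length).filter (fun i => G.Adj z (l.getD i d))).card = G.degree z := by
  rw [← SimpleGraph.card_neighborFinset_eq_degree]
  apply Finset.card_bij (fun i _ => l.getD i d)
  · intro i hi
    simp only [Finset.mem_filter, Finset.mem_range] at hi
    simpa using hi.2
  · intro i hi j hj hij
    simp only [Finset.mem_filter, Finset.mem_range] at hi hj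
    rwa [l.getD_eq_getElem d hi.1, l.getD_eq_getElem d hj.1,
      List.Nodup.getElem_inj_iff hnd] at hij
  · intro w hw
    rw [SimpleGraph.mem_neighborFinset] at hw
    obtain ⟨i, hi, hli⟩ := List.getElem_of_mem (hall w hw)
    exact ⟨i, by
      simp only [Finset.mem_filter, Finset.mem_range]
      exact ⟨hi, by rw [l.getD_eq_getElem d hi, hli]; exact hw⟩,
      by rw [l.getD_eq_getElem d hi, hli]⟩

lemma key {V : Type*} [Fintype V] [DecidableEq V] (G : SimpleGraph V) [DecidableRel G.Adj]
    [Nonempty V] (c : G.ConnectedComponent) :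
    ∃ l : List V, l ≠ [] ∧ l.Nodup ∧ l.Chain' G.Adj ∧
      min (c.supp.ncard) (2 * G.minDegree + 1) ≤ l.length := by
  classical
  set Good : List V → Prop :=
    fun l => l ≠ [] ∧ l.Nodup ∧ l.Chain' G.Adj ∧ ∀ x ∈ l, x ∈ c.supp with hGood
  set A : Set ℕ := {m | ∃ l, Good l ∧ l.length = m} with hA
  obtain ⟨v₀, hv₀⟩ := c.exists_rep
  have hv₀' : v₀ ∈ c.supp := by rwa [SimpleGraph.ConnectedComponent.mem_supp_iff]
  have hA1 : A.Nonempty := ⟨1, [v₀], ⟨by simp, by simp, List.isChain_singleton _, by simpa using hv₀'⟩, rfl⟩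
  have hA2 : BddAbove A := ⟨Fintype.card V, by
    rintro m ⟨l, hl, rfl⟩; exact hl.2.1.length_le_card⟩
  obtain ⟨l, ⟨hne, hnd, hch, hmem⟩, hlen⟩ := Nat.sSup_mem hA1 hA2
  have hmax : ∀ l', Good l' → l'.length ≤ l.length := by
    intro l' h'
    rw [hlen]; exact le_csSup hA2 ⟨l', h', rfl⟩
  set u := l.head hne with hu
  set v := l.getLast hne with hv
  have hclose : ∀ x ∈ c.supp, ∀ y, G.Adj x y → y ∈ c.supp := by
    intro x hx y hxy
    rw [SimpleGraph.ConnectedComponent.mem_supp_iff] at hx ⊢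
    rw [← hx]
    exact SimpleGraph.ConnectedComponent.sound hxy.symm.reachable
  -- neighbors of the head of any maximum good list lie on the list
  have hext : ∀ (l' : List V) (h' : l' ≠ []), l'.Nodup → l'.Chain' G.Adj →
      (∀ x ∈ l', x ∈ c.supp) → l'.length = l.length →
      ∀ w, G.Adj (l'.head h') w → w ∈ l' := by
    intro l' h' hnd' hch' hmem' hlen' w hw
    by_contra hwl
    have hg : Good (w :: l') := by
      refine ⟨by simp, List.nodup_cons.mpr ⟨hwl, hnd'⟩, ?_, ?_⟩
      · exact List.isChain_cons.mpr ⟨fun y hy => by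
          rw [List.head?_eq_head h'] at hy; cases hy; exact hw.symm, hch'⟩
      · intro x hx
        rcases List.mem_cons.mp hx with rfl | hx
        · exact hclose _ (hmem' _ (List.head_mem h')) _ hw
        · exact hmem' x hx
    have := hmax _ hg
    simp [hlen'] at this
  have hNu : ∀ w, G.Adj u w → w ∈ l := hext l hne hnd hch hmem rfl
  have hNv : ∀ w, G.Adj v w → w ∈ l := by
    intro w hw
    have hne' : l.reverse ≠ [] := by simpa using hne
    have := hext l.reverse hne' (List.nodup_reverse.mpr hnd) (by
        simp only [List.Chain', List.isChain_reverse]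
        exact hch.imp (fun _ _ hab => hab.symm)) (by simpa using hmem) (by simp) w (by
        rwa [List.head_reverse])
    simpa using this
  have hM1 : 1 ≤ l.length := List.length_pos_iff.mpr hne
  by_cases hbig : 2 * G.minDegree + 1 ≤ l.length
  · exact ⟨l, hne, hnd, hch, le_trans (min_le_right _ _) hbig⟩
  push_neg at hbig
  have hsmall : l.length ≤ 2 * G.minDegree := by omega
  -- index sets
  set Iu := (Finset.range l.length).filter (fun i => G.Adj u (l.getD i u)) with hIu
  set Iv := (Finset.range l.length).filter (fun i => G.Adj v (l.getD i u)) with hIv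
  have hIucard : Iu.card = G.degree u := card_adjIdx G hnd u hNu
  have hIvcard : Iv.card = G.degree v := card_adjIdx G hnd u hNv
  set As := (Finset.range (l.length - 1)).filter (fun i => G.Adj u (l.getD (i+1) u)) with hAs
  set Bs := (Finset.range (l.length - 1)).filter (fun i => G.Adj v (l.getD i u)) with hBs
  have hAcard : As.card = Iu.card := by
    apply Finset.card_bij (fun i _ => i + 1)
    · intro i hi
      simp only [hAs, hIu, Finset.mem_filter, Finset.mem_range] at hi ⊢
      exact ⟨by omega, hi.2⟩
    · intro i _ j _ h; omega
    · intro j hj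
      simp only [hIu, Finset.mem_filter, Finset.mem_range] at hj
      have hj0 : j ≠ 0 := by
        rintro rfl
        rw [l.getD_eq_getElem u (by omega), ← List.head_eq_getElem_zero hne] at hj
        exact G.irrefl hj.2
      refine ⟨j - 1, ?_, by omega⟩
      simp only [hAs, Finset.mem_filter, Finset.mem_range]
      constructor
      · omega
      · have hj1 : j - 1 + 1 = j := by omega
        rw [hj1]; exact hj.2
  have hBeq : Bs = Iv := by
    ext i
    simp only [hBs, hIv, Finset.mem_filter, Finset.mem_range]
    constructor
    · rintro ⟨h1, h2⟩; exact ⟨by omega, h2⟩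
    · rintro ⟨h1, h2⟩
      refine ⟨?_, h2⟩
      rcases Nat.lt_or_ge i (l.length - 1) with h | h
      · exact h
      · exfalso
        have hieq : i = l.length - 1 := by omega
        subst hieq
        rw [l.getD_eq_getElem u (by omega), ← List.getLast_eq_getElem hne] at h2
        exact G.irrefl h2
  have hdu : G.minDegree ≤ G.degree u := SimpleGraph.minDegree_le_degree G u
  have hdv : G.minDegree ≤ G.degree v := SimpleGraph.minDegree_le_degree G v
  have hunion : (As ∪ Bs).card ≤ l.length - 1 := by
    have hs : As ∪ Bs ⊆ Finset.range (l.length - 1) := by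
      apply Finset.union_subset <;> exact Finset.filter_subset _ _
    simpa using Finset.card_le_card hs
  have hinter : (As ∩ Bs).Nonempty := by
    rw [← Finset.card_pos]
    have h1 : As.card + Bs.card = (As ∪ Bs).card + (As ∩ Bs).card :=
      (Finset.card_union_add_card_inter As Bs).symm
    have h2 : 2 * G.minDegree ≤ As.card + Bs.card := by
      rw [hAcard, hIucard, hBeq, hIvcard]; omega
    omega
  obtain ⟨i, hi⟩ := hinter
  simp only [hAs, hBs, Finset.mem_inter, Finset.mem_filter, Finset.mem_range] at hi
  obtain ⟨⟨hi1, hiu⟩, _, hiv⟩ := hi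
  have hi2 : i + 1 < l.length := by omega
  -- the cycle
  set cyc := l.take (i+1) ++ (l.drop (i+1)).reverse with hcyc
  have htakene : l.take (i+1) ≠ [] := by
    rw [← List.length_pos_iff]; simp only [List.length_take]; omega
  have hdropne : l.drop (i+1) ≠ [] := by
    rw [← List.length_pos_iff]; simp only [List.length_drop]; omega
  have hcycperm : cyc.Perm l := by
    refine List.Perm.trans (List.Perm.append_left _ (List.reverse_perm _)) ?_
    rw [List.take_append_drop]
  have hcyclen : cyc.length = l.length := by rw [hcycperm.length_eq]
  have hcycnd : cyc.Nodup := hcycperm.nodup_iff.mpr hnd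
  have hcycmem : ∀ x ∈ cyc, x ∈ c.supp := fun x hx => hmem x (hcycperm.mem_iff.mp hx)
  have hcycne : cyc ≠ [] := by rw [← List.length_pos_iff]; omega
  have hgetlasttake : (l.take (i+1)).getLast htakene = l.getD i u := by
    rw [List.getLast_eq_getElem, l.getD_eq_getElem u (by omega)]
    simp only [List.getElem_take]
    congr 1
    simp only [List.length_take]
    omega
  have hgetlastdrop : (l.drop (i+1)).getLast hdropne = v := by
    rw [List.getLast_eq_getElem, hv, List.getLast_eq_getElem hne]
    simp only [List.getElem_drop]
    congr 1
    simp only [List.length_drop]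
    omega
  have hcycch : cyc.Chain' G.Adj := by
    rw [hcyc]; simp only [List.Chain', List.isChain_append]
    refine ⟨hch.take _, ?_, ?_⟩
    · simp only [List.Chain', List.isChain_reverse]
      exact (hch.drop _).imp (fun _ _ hab => hab.symm)
    · intro x hx y hy
      rw [List.getLast?_eq_getLast htakene] at hx
      rw [List.head?_reverse, List.getLast?_eq_getLast hdropne] at hy
      cases hx; cases hy
      rw [hgetlasttake, hgetlastdrop]
      exact hiv.symm
  have hcychead : cyc.head hcycne = u := by
    show (l.take (i+1) ++ (l.drop (i+1)).reverse).head _ = u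
    rw [List.head_append_of_ne_nil htakene, List.head_take]
  have hcyclast : ∀ (h : cyc ≠ []), G.Adj (cyc.getLast h) (cyc.head h) := by
    intro h
    rw [hcychead]
    have hgl : cyc.getLast h = l.getD (i+1) u := by
      show (l.take (i+1) ++ (l.drop (i+1)).reverse).getLast _ = l.getD (i+1) u
      rw [List.getLast_append_of_ne_nil _ (by simpa using hdropne), List.getLast_reverse,
        List.head_drop, l.getD_eq_getElem u hi2]
    rw [hgl]
    exact hiu.symm
  -- covering
  have hcover : ∀ x ∈ c.supp, x ∈ l := by
    intro x hx
    by_contra hxl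
    have hul : u ∈ l := List.head_mem hne
    have hreach : G.Reachable x u := by
      apply SimpleGraph.ConnectedComponent.exact
      rw [SimpleGraph.ConnectedComponent.mem_supp_iff] at hx
      have hus : u ∈ c.supp := hmem u hul
      rw [SimpleGraph.ConnectedComponent.mem_supp_iff] at hus
      rw [hx, hus]
    obtain ⟨y, z, hyz, hyl, hzl⟩ := crossEdge G (· ∈ l) hreach.some hxl hul
    have hy : y ∈ c.supp := hclose z (hmem z hzl) y hyz.symm
    have hzc : z ∈ cyc := hcycperm.mem_iff.mpr hzl
    obtain ⟨m, hm, hzm⟩ := List.getElem_of_mem hzc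
    have hrotne : cyc.rotate m ≠ [] := by
      rw [← List.length_pos_iff, List.length_rotate]; omega
    have hg : Good (y :: cyc.rotate m) := by
      refine ⟨by simp, ?_, ?_, ?_⟩
      · refine List.nodup_cons.mpr ⟨?_, List.nodup_rotate.mpr hcycnd⟩
        intro hmem'
        exact hyl (hcycperm.mem_iff.mp (List.mem_rotate.mp hmem'))
      · refine List.isChain_cons.mpr ⟨?_, chain'_rotate hcycch hcyclast m⟩
        intro w hw
        rw [List.head?_eq_head hrotne] at hw
        cases hw
        rw [head_rotate hm]
        simp only [List.get_eq_getElem, hzm]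
        exact hyz
      · intro x' hx'
        rcases List.mem_cons.mp hx' with rfl | hx'
        · exact hy
        · exact hcycmem x' (List.mem_rotate.mp hx')
    have := hmax _ hg
    simp [List.length_rotate, hcyclen] at this
  refine ⟨l, hne, hnd, hch, le_trans (min_le_left _ _) ?_⟩
  have hsub : c.supp ⊆ (l.toFinset : Set V) := by
    intro x hx; simpa using hcover x hx
  calc c.supp.ncard ≤ ((l.toFinset : Finset V) : Set V).ncard :=
        Set.ncard_le_ncard hsub (Set.toFinite _)
    _ = l.toFinset.card := Set.ncard_coe_finset _
    _ ≤ l.length := List.toFinset_card_le l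

theorem stmt_1 {V : Type*} [Fintype V] [DecidableEq V]
    (G : SimpleGraph V) [DecidableRel G.Adj] (n k : ℕ) (hn : 1 ≤ n) (hk : 1 ≤ k)
    (hcard : Fintype.card V = n)
    (hdeg : G.minDegree ≥ n / (k + 1)) :
    ∃ (u v : V) (p : G.Walk u v), p.IsPath ∧ (⌈(n : ℚ) / k⌉ : ℤ) ≤ p.length + 1 := by
  classical
  haveI : Nonempty V := Fintype.card_pos_iff.mp (by omega)
  haveI := Fintype.ofFinite G.ConnectedComponent
  set δ := G.minDegree with hδ
  set fib : G.ConnectedComponent → Finset V :=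
    fun c => Finset.univ.filter (fun v => G.connectedComponentMk v = c) with hfib
  have hsum : Fintype.card V = ∑ c : G.ConnectedComponent, (fib c).card := by
    rw [← Finset.card_univ]
    exact Finset.card_eq_sum_card_fiberwise (fun x _ => Finset.mem_univ _)
  have hsupp : ∀ c : G.ConnectedComponent, c.supp.ncard = (fib c).card := by
    intro c
    rw [← Set.ncard_coe_finset]
    congr 1
    ext x
    simp [hfib, SimpleGraph.ConnectedComponent.mem_supp_iff]
  have hfiblb : ∀ c : G.ConnectedComponent, δ + 1 ≤ (fib c).card := by
    intro c
    obtain ⟨w, hw⟩ := c.exists_rep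
    have hsub : insert w (G.neighborFinset w) ⊆ fib c := by
      intro x hx
      simp only [hfib, Finset.mem_filter, Finset.mem_univ, true_and]
      rcases Finset.mem_insert.mp hx with rfl | hx
      · exact hw
      · rw [SimpleGraph.mem_neighborFinset] at hx
        rw [← hw]
        exact SimpleGraph.ConnectedComponent.sound hx.symm.reachable
    have hcardins : (insert w (G.neighborFinset w)).card = G.degree w + 1 := by
      rw [Finset.card_insert_of_notMem (SimpleGraph.notMem_neighborFinset_self G w),
        SimpleGraph.card_neighborFinset_eq_degree]
    have := Finset.card_le_card hsub
    rw [hcardins] at this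
    have hd := SimpleGraph.minDegree_le_degree G w
    omega
  set t := Fintype.card G.ConnectedComponent with ht
  have htlb : t * (δ + 1) ≤ n := by
    calc t * (δ + 1) = Finset.univ.card • (δ + 1) := by
          rw [Finset.card_univ, smul_eq_mul]
      _ ≤ ∑ c : G.ConnectedComponent, (fib c).card :=
          Finset.card_nsmul_le_sum _ _ _ (fun c _ => hfiblb c)
      _ = n := by rw [← hsum, hcard]
  haveI : Nonempty G.ConnectedComponent := ⟨G.connectedComponentMk Classical.ofNonempty⟩
  obtain ⟨c₀, -, hc₀⟩ := Finset.exists_max_image Finset.univ (fun c => (fib c).card)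
    Finset.univ_nonempty
  have hnub : n ≤ t * (fib c₀).card := by
    calc n = ∑ c : G.ConnectedComponent, (fib c).card := by rw [← hsum, hcard]
      _ ≤ Finset.univ.card • (fib c₀).card :=
          Finset.sum_le_card_nsmul _ _ _ (fun c _ => hc₀ c (Finset.mem_univ c))
      _ = t * (fib c₀).card := by rw [Finset.card_univ, smul_eq_mul]
  -- arithmetic
  have hdm : n / (k+1) ≤ δ := hdeg
  have hmod : (k+1) * (n / (k+1)) + n % (k+1) = n := Nat.div_add_mod n (k+1)
  have hmodlt : n % (k+1) < k + 1 := Nat.mod_lt _ (by omega)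
  have htk : t ≤ k := by
    by_contra h
    push_neg at h
    have h1 : (k+1) * (δ+1) ≤ t * (δ+1) := Nat.mul_le_mul_right _ h
    have h2 : (k+1) * (n/(k+1)+1) ≤ (k+1) * (δ+1) := Nat.mul_le_mul_left _ (by omega)
    have h3 : (k+1) * (n/(k+1)+1) = (k+1) * (n/(k+1)) + (k+1) := by ring
    omega
  have hkey2 : n ≤ k * (2 * δ + 1) := by
    have h1 : (k+1) * (n/(k+1)) ≤ (k+1) * δ := Nat.mul_le_mul_left _ hdm
    have h2 : (k+1) * δ ≤ 2 * k * δ := Nat.mul_le_mul_right _ (by omega)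
    have h3 : k * (2 * δ + 1) = 2 * k * δ + k := by ring
    omega
  have hkey1 : n ≤ k * (fib c₀).card := le_trans hnub (Nat.mul_le_mul_right _ htk)
  have hminkey : n ≤ k * min ((fib c₀).card) (2 * δ + 1) := by
    rcases min_choice ((fib c₀).card) (2 * δ + 1) with h | h <;> rw [h]
    · exact hkey1
    · exact hkey2
  -- get the path
  obtain ⟨l, hne, hnd, hch, hlb⟩ := key G c₀
  rw [hsupp] at hlb
  obtain ⟨p, hp⟩ := listToWalk G l hne hch
  refine ⟨_, _, p, ?_, ?_⟩
  · rw [SimpleGraph.Walk.isPath_def, hp]; exact hnd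
  · have hlen : p.length + 1 = l.length := by
      rw [← SimpleGraph.Walk.length_support, hp]
    have hfin : n ≤ k * (p.length + 1) := by
      rw [hlen]
      exact le_trans hminkey (Nat.mul_le_mul_left _ hlb)
    rw [Int.ceil_le]
    push_cast
    rw [div_le_iff₀ (by positivity)]
    have : (n : ℚ) ≤ (k : ℚ) * (p.length + 1) := by exact_mod_cast hfin
    linarith
end

section
/- Let G be a connected graph with minimum degree δ and at least 2δ+1 vertices. Then G contains a path on at least 2δ+1 vertices. -/
namespace SimpleGraph.Walk
variable {V : Type*} {G : SimpleGraph V}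

lemma length_drop'' {u v : V} (p : G.Walk u v) (n : ℕ) :
    (p.drop n).length = p.length - n := by
  induction p generalizing n with
  | nil => cases n <;> simp [drop]
  | cons h q ih =>
    cases n with
    | zero => simp [drop]
    | succ n => simp [drop, ih]

lemma support_drop'' {u v : V} (p : G.Walk u v) (n : ℕ) (hn : n ≤ p.length) :
    (p.drop n).support = p.support.drop n := by
  induction p generalizing n with
  | nil =>
    simp only [length_nil, Nat.le_zero] at hn
    subst hn
    simp [drop]
  | cons h q ih =>
    cases n with
    | zero => simp [drop]
    | succ n =>
      simp only [length_cons, Nat.succ_le_succ_iff] at hn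
      simp [drop, ih _ hn]

end SimpleGraph.Walk

open SimpleGraph Walk

theorem stmt_2 {V : Type*} [Fintype V] [DecidableEq V]
    (G : SimpleGraph V) [DecidableRel G.Adj] (hconn : G.Connected)
    (hcard : Fintype.card V ≥ 2 * G.minDegree + 1) :
    ∃ (u v : V) (p : G.Walk u v), p.IsPath ∧ 2 * G.minDegree + 1 ≤ p.length + 1 := by
  classical
  have hne : Nonempty V := hconn.nonempty
  set δ := G.minDegree with hδdef
  let P : ℕ → Prop := fun n => ∃ (u v : V) (p : G.Walk u v), p.IsPath ∧ p.length = n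
  have hP0 : P 0 := ⟨Classical.arbitrary V, _, Walk.nil, Walk.IsPath.nil, rfl⟩
  set L := Nat.findGreatest P (Fintype.card V) with hLdef
  have hPL : P L := Nat.findGreatest_spec (Nat.zero_le _) hP0
  have hmax : ∀ (a b : V) (q : G.Walk a b), q.IsPath → q.length ≤ L := by
    intro a b q hq
    by_contra hgt
    push_neg at hgt
    exact Nat.findGreatest_is_greatest hgt (le_of_lt hq.length_lt) ⟨a, b, q, hq, rfl⟩
  obtain ⟨u, v, p, hp, hlen⟩ := hPL
  suffices h2δ : 2 * δ ≤ L by exact ⟨u, v, p, hp, by omega⟩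
  by_contra hlt
  push_neg at hlt
  -- L < 2δ, so L + 1 ≤ 2δ < card V
  have hLcard : L + 1 < Fintype.card V := by omega
  set S := p.support with hSdef
  have hSnodup : S.Nodup := hp.support_nodup
  have hSlen : S.length = L + 1 := by
    rw [hSdef, Walk.length_support, hlen]
  -- non-extension
  have hext : ∀ (a b : V) (q : G.Walk a b), q.IsPath → q.length = L →
      ∀ w, G.Adj a w → w ∈ q.support := by
    intro a b q hq hql w hw
    by_contra hws
    have hcons : (q.cons hw.symm).IsPath := hq.cons hws
    have := hmax _ _ _ hcons
    rw [Walk.length_cons, hql] at this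
    omega
  have hnbru : ∀ w, G.Adj u w → w ∈ S := hext u v p hp hlen
  have hnbrv : ∀ w, G.Adj v w → w ∈ S := by
    intro w hw
    have := hext v u p.reverse hp.reverse (by rw [Walk.length_reverse, hlen]) w hw
    rwa [Walk.support_reverse, List.mem_reverse] at this
  -- index sets
  set AFin : Finset ℕ := (Finset.Icc 1 L).filter (fun j => G.Adj u (p.getVert j)) with hAdef
  set BFin : Finset ℕ := (Finset.Icc 1 L).filter (fun j => G.Adj v (p.getVert (j - 1))) with hBdef
  have hAcard : δ ≤ AFin.card := by
    have hsurj : Set.SurjOn (fun j => p.getVert j) (↑AFin) (↑(G.neighborFinset u)) := by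
      intro w hw
      rw [Finset.mem_coe, SimpleGraph.mem_neighborFinset] at hw
      obtain ⟨n, hn, hnle⟩ := Walk.mem_support_iff_exists_getVert.mp (hnbru w hw)
      have hn0 : n ≠ 0 := by
        intro h; rw [h, Walk.getVert_zero] at hn; exact hw.ne hn
      refine ⟨n, ?_, hn⟩
      rw [Finset.mem_coe, hAdef, Finset.mem_filter, Finset.mem_Icc]
      refine ⟨⟨by omega, by omega⟩, by rw [hn]; exact hw⟩
    calc δ ≤ G.degree u := G.minDegree_le_degree u
    _ = (G.neighborFinset u).card := rfl
    _ ≤ AFin.card := Finset.card_le_card_of_surjOn _ hsurj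
  have hBcard : δ ≤ BFin.card := by
    have hsurj : Set.SurjOn (fun j => p.getVert (j - 1)) (↑BFin) (↑(G.neighborFinset v)) := by
      intro w hw
      rw [Finset.mem_coe, SimpleGraph.mem_neighborFinset] at hw
      obtain ⟨n, hn, hnle⟩ := Walk.mem_support_iff_exists_getVert.mp (hnbrv w hw)
      have hnL : n ≠ L := by
        intro h
        rw [h, ← hlen, Walk.getVert_length] at hn
        exact hw.ne hn
      refine ⟨n + 1, ?_, by simpa using hn⟩
      rw [Finset.mem_coe, hBdef, Finset.mem_filter, Finset.mem_Icc]
      refine ⟨⟨by omega, by omega⟩, by simpa [hn] using hw⟩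
    calc δ ≤ G.degree v := G.minDegree_le_degree v
    _ = (G.neighborFinset v).card := rfl
    _ ≤ BFin.card := Finset.card_le_card_of_surjOn _ hsurj
  have hABsub : AFin ∪ BFin ⊆ Finset.Icc 1 L := by
    intro j hj
    rw [Finset.mem_union] at hj
    rcases hj with hj | hj <;> exact (Finset.mem_filter.mp hj).1
  have hUcard : (AFin ∪ BFin).card ≤ L := by
    calc (AFin ∪ BFin).card ≤ (Finset.Icc 1 L).card := Finset.card_le_card hABsub
    _ = L := by rw [Nat.card_Icc]; omega
  have hinter : (AFin ∩ BFin).Nonempty := by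
    rw [← Finset.card_pos]
    have := Finset.card_union_add_card_inter AFin BFin
    omega
  obtain ⟨i, hi⟩ := hinter
  rw [Finset.mem_inter] at hi
  obtain ⟨hiA, hiB⟩ := hi
  rw [hAdef, Finset.mem_filter, Finset.mem_Icc] at hiA
  rw [hBdef, Finset.mem_filter, Finset.mem_Icc] at hiB
  obtain ⟨⟨hi1, hiL⟩, hub⟩ := hiA
  obtain ⟨-, hva⟩ := hiB
  -- build the closed walk
  set k := L - (i - 1) with hkdef
  set tk : G.Walk u (p.reverse.getVert k) := (p.reverse.drop k).reverse with htkdef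
  have hAeq : p.reverse.getVert k = p.getVert (i - 1) := by
    rw [Walk.getVert_reverse]
    congr 1
    omega
  have hva' : G.Adj v (p.reverse.getVert k) := by rw [hAeq]; exact hva
  set r : G.Walk (p.getVert i) u := (p.drop i).append (Walk.cons hva' tk.reverse) with hrdef
  have htklen : tk.length = i - 1 := by
    rw [htkdef, Walk.length_reverse, Walk.length_drop'', Walk.length_reverse, hlen]
    omega
  have hrlen : r.length = L := by
    rw [hrdef, Walk.length_append, Walk.length_cons, Walk.length_reverse,
      Walk.length_drop'', hlen, htklen]
    omega
  have htksup : tk.support = S.take i := by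
    rw [htkdef, Walk.support_reverse, Walk.support_drop'' _ _ (by rw [Walk.length_reverse, hlen]; omega),
      Walk.support_reverse]
    rw [← List.rdrop_eq_reverse_drop_reverse, List.rdrop]
    congr 1
    rw [hSlen]
    omega
  have hrsup : r.support = S.drop i ++ (S.take i).reverse := by
    rw [hrdef, Walk.support_append, Walk.support_cons, List.tail_cons, Walk.support_reverse,
      Walk.support_drop'' _ _ (by omega), htksup]
  have hrmem : ∀ z, z ∈ r.support ↔ z ∈ S := by
    intro z
    rw [hrsup]
    conv_rhs => rw [← List.take_append_drop i S]
    simp only [List.mem_append, List.mem_reverse]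
    tauto
  have hrnodup : r.support.Nodup := by
    rw [hrsup]
    have hS2 : (S.take i ++ S.drop i).Nodup := by rw [List.take_append_drop]; exact hSnodup
    rw [List.nodup_append] at hS2 ⊢
    refine ⟨hS2.2.1, List.nodup_reverse.mpr hS2.1, ?_⟩
    intro z hz b hb
    rw [List.mem_reverse] at hb
    exact (hS2.2.2 b hb z hz).symm
  set c : G.Walk u u := Walk.cons hub r with hcdef
  have hcsuptail : c.support.tail = r.support := by
    rw [hcdef, Walk.support_cons, List.tail_cons]
  have hclen : c.length = L + 1 := by rw [hcdef, Walk.length_cons, hrlen]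
  -- find vertex outside S adjacent to S
  have hout : ∃ w, w ∉ S := by
    by_contra hall
    push_neg at hall
    have : (Finset.univ : Finset V) ⊆ S.toFinset := by
      intro z _; rw [List.mem_toFinset]; exact hall z
    have := Finset.card_le_card this
    rw [Finset.card_univ, List.toFinset_card_of_nodup hSnodup, hSlen] at this
    omega
  obtain ⟨w, hw⟩ := hout
  obtain ⟨q0⟩ := hconn u w
  obtain ⟨d, -, hdfst, hdsnd⟩ := q0.exists_boundary_dart {z | z ∈ S}
    (p.start_mem_support) hw
  -- rotate c to start at d.fst
  have hxc : d.fst ∈ c.support := by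
    rw [hcdef, Walk.support_cons, List.mem_cons, ← hcsuptail, hcdef, Walk.support_cons,
      List.tail_cons]
    right
    exact (hrmem d.fst).mpr hdfst
  set rot : G.Walk d.fst d.fst := c.rotate _ hxc with hrotdef
  have hrotlen : rot.length = L + 1 := by
    have hspec := congrArg Walk.length (c.take_spec hxc)
    rw [Walk.length_append] at hspec
    rw [hrotdef, Walk.rotate, Walk.length_append]
    omega
  have hrotnil : ¬ rot.Nil := by
    rw [Walk.not_nil_iff_lt_length, hrotlen]; omega
  have hrotperm : List.Perm rot.support.tail c.support.tail :=
    (Walk.support_rotate c _ hxc).perm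
  set pt : G.Walk (rot.getVert 1) d.fst := rot.tail with hptdef
  have hptsup : pt.support = rot.support.tail := Walk.support_tail_of_not_nil rot hrotnil
  have hptnodup : pt.support.Nodup := by
    rw [hptsup, hrotperm.nodup_iff, hcsuptail]
    exact hrnodup
  have hptpath : pt.IsPath := Walk.IsPath.mk' hptnodup
  have hptlen : pt.length = L := by
    have := Walk.length_tail_add_one hrotnil
    rw [← hptdef] at this
    omega
  have hptmem : ∀ z, z ∈ pt.support → z ∈ S := by
    intro z hz
    rw [hptsup] at hz
    have := hrotperm.mem_iff.mp hz
    rw [hcsuptail] at this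
    exact (hrmem z).mp this
  -- extend to a longer path
  have hwadj : G.Adj d.snd d.fst := d.adj.symm
  have hnotin : d.snd ∉ pt.reverse.support := by
    rw [Walk.support_reverse, List.mem_reverse]
    intro hmem
    exact hdsnd (hptmem _ hmem)
  have hfinal : (pt.reverse.cons hwadj).IsPath := hptpath.reverse.cons hnotin
  have := hmax _ _ _ hfinal
  rw [Walk.length_cons, Walk.length_reverse, hptlen] at this
  omega
end

section
/- Let G be a connected graph that is neither a complete graph nor an odd cycle. Then the chromatic number of G is at most its maximum degree: χ(G) ≤ Δ(G). -/
set_option linter.unusedSectionVars false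

namespace Brooks

lemma exists_not_mem_finset (s : Finset ℕ) : ∃ m, m ∉ s := by
  refine ⟨s.sup id + 1, fun h => ?_⟩
  have := Finset.le_sup (f := id) h
  simp only [id] at this
  omega

/-- least natural number not in `s` -/
noncomputable def mex (s : Finset ℕ) : ℕ := Nat.find (exists_not_mem_finset s)

lemma mex_not_mem (s : Finset ℕ) : mex s ∉ s := Nat.find_spec (exists_not_mem_finset s)

lemma mex_le_card (s : Finset ℕ) : mex s ≤ s.card := by
  have hsub : Finset.range (mex s) ⊆ s := by
    intro k hk
    rw [Finset.mem_range] at hk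
    have := Nat.find_min (exists_not_mem_finset s) hk
    simpa using this
  simpa using Finset.card_le_card hsub

lemma mex_empty : mex ∅ = 0 := by
  have := mex_le_card ∅; simpa using this

variable {V : Type*} [Fintype V] [DecidableEq V] (G : SimpleGraph V) [DecidableRel G.Adj]

/-- the neighbors of `v` that come earlier in the rank order -/
def nbrsBefore (r : V → ℕ) (v : V) : Finset V :=
  Finset.univ.filter (fun w => G.Adj v w ∧ r w < r v)

lemma mem_nbrsBefore {r : V → ℕ} {v w : V} :
    w ∈ nbrsBefore G r v ↔ G.Adj v w ∧ r w < r v := by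
  simp [nbrsBefore]

/-- greedy coloring along the rank order -/
noncomputable def greedy (r : V → ℕ) (v : V) : ℕ :=
  mex ((nbrsBefore G r v).attach.image (fun w => greedy r w.1))
termination_by r v
decreasing_by
  have hw := w.2
  simp only [nbrsBefore, Finset.mem_filter] at hw
  exact hw.2.2

lemma greedy_def (r : V → ℕ) (v : V) :
    greedy G r v = mex ((nbrsBefore G r v).attach.image (fun w => greedy G r w.1)) := by
  rw [greedy]

lemma greedy_ne {r : V → ℕ} {v w : V} (h : w ∈ nbrsBefore G r v) :
    greedy G r v ≠ greedy G r w := by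
  rw [greedy_def]
  intro hEq
  apply mex_not_mem ((nbrsBefore G r v).attach.image (fun w => greedy G r w.1))
  rw [hEq]
  exact Finset.mem_image.2 ⟨⟨w, h⟩, Finset.mem_attach _ _, rfl⟩

lemma greedy_le_card (r : V → ℕ) (v : V) :
    greedy G r v ≤ (nbrsBefore G r v).card := by
  rw [greedy_def]
  exact (mex_le_card _).trans (Finset.card_image_le.trans (by simp))

lemma greedy_lt_card_of_dup {r : V → ℕ} {v b c : V} (hb : b ∈ nbrsBefore G r v)
    (hc : c ∈ nbrsBefore G r v) (hbc : b ≠ c) (heq : greedy G r b = greedy G r c) :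
    greedy G r v < (nbrsBefore G r v).card := by
  rw [greedy_def]
  have hsub : (nbrsBefore G r v).attach.image (fun w => greedy G r w.1) ⊆
      ((nbrsBefore G r v).attach.erase ⟨b, hb⟩).image (fun w => greedy G r w.1) := by
    intro x hx
    rw [Finset.mem_image] at hx
    obtain ⟨y, hy, rfl⟩ := hx
    by_cases hyb : y = ⟨b, hb⟩
    · subst hyb
      exact Finset.mem_image.2 ⟨⟨c, hc⟩, Finset.mem_erase.2 ⟨by simp [Subtype.ext_iff, hbc.symm],
        Finset.mem_attach _ _⟩, heq.symm⟩
    · exact Finset.mem_image.2 ⟨y, Finset.mem_erase.2 ⟨hyb, Finset.mem_attach _ _⟩, rfl⟩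
  have h1 : ((nbrsBefore G r v).attach.erase ⟨b, hb⟩).card < (nbrsBefore G r v).card := by
    rw [Finset.card_erase_of_mem (Finset.mem_attach _ _), Finset.card_attach]
    have : 0 < (nbrsBefore G r v).card := Finset.card_pos.2 ⟨b, hb⟩
    omega
  calc mex _ ≤ _ := (mex_le_card _).trans (Finset.card_le_card hsub)
    _ ≤ _ := Finset.card_image_le
    _ < _ := h1

lemma colorable_of_greedy_lt {r : V → ℕ} (hr : Function.Injective r) {k : ℕ}
    (h : ∀ v, greedy G r v < k) : G.Colorable k := by
  refine ⟨SimpleGraph.Coloring.mk (fun v => ⟨greedy G r v, h v⟩) ?_⟩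
  intro v w hadj
  simp only [ne_eq, Fin.mk.injEq]
  rcases lt_or_gt_of_ne (fun hE : r v = r w => G.ne_of_adj hadj (hr hE)) with hlt | hlt
  · exact fun hE => greedy_ne G ((mem_nbrsBefore G).2 ⟨hadj.symm, hlt⟩) hE.symm
  · exact greedy_ne G ((mem_nbrsBefore G).2 ⟨hadj, hlt⟩)


section dist
variable {W : Type*} (H : SimpleGraph W)

lemma exists_adj_dist_lt {v x : W} (hvx : v ≠ x) (h : H.Reachable v x) :
    ∃ w, H.Adj v w ∧ H.dist w x < H.dist v x := by
  obtain ⟨p, hp⟩ := h.exists_walk_length_eq_dist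
  cases p with
  | nil => exact absurd rfl hvx
  | cons hadj q =>
    refine ⟨_, hadj, ?_⟩
    have h1 := H.dist_le q
    simp only [SimpleGraph.Walk.length_cons] at hp
    omega

lemma dist_lt_card [Fintype W] {v x : W} (h : H.Reachable v x) :
    H.dist v x < Fintype.card W := by
  obtain ⟨p, hp, hlen⟩ := h.exists_path_of_dist
  rw [← hlen]
  exact hp.length_lt

end dist

lemma rank_aux {n a b i j : ℕ} (hi : i < n) (hj : j < n) (h : a * n + i = b * n + j) :
    i = j ∧ a = b := by
  have h1 : (a * n + i) % n = i := by
    rw [Nat.mul_comm, Nat.mul_add_mod]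
    exact Nat.mod_eq_of_lt hi
  have h2 : (b * n + j) % n = j := by
    rw [Nat.mul_comm, Nat.mul_add_mod]
    exact Nat.mod_eq_of_lt hj
  have hij : i = j := by rw [← h1, ← h2, h]
  constructor
  · exact hij
  · subst hij
    have : a * n = b * n := by omega
    rcases Nat.eq_zero_or_pos n with h0 | h0
    · omega
    · exact Nat.eq_of_mul_eq_mul_right h0 this

/-- If `G` is connected with all degrees `≤ k` and some vertex of degree `< k`,
then `G` is `k`-colorable. -/
lemma colorable_of_exists_small (hc : G.Connected) {k : ℕ} (hdeg : ∀ v, G.degree v ≤ k)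
    {x : V} (hx : G.degree x < k) : G.Colorable k := by
  classical
  set n := Fintype.card V with hn
  let e := Fintype.equivFin V
  let r : V → ℕ := fun v => (n - G.dist v x) * n + (e v : ℕ)
  have hrinj : Function.Injective r := by
    intro u v huv
    have := rank_aux (e u).2 (e v).2 huv
    exact e.injective (Fin.ext this.1)
  have hcard : ∀ v, (nbrsBefore G r v).card < k := by
    intro v
    by_cases hvx : v = x
    · subst hvx
      have hsub : nbrsBefore G r v ⊆ G.neighborFinset v := by
        intro w hw
        rw [SimpleGraph.mem_neighborFinset]
        exact ((mem_nbrsBefore G).1 hw).1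
      calc (nbrsBefore G r v).card ≤ _ := Finset.card_le_card hsub
        _ = G.degree v := G.card_neighborFinset_eq_degree v
        _ < k := hx
    · obtain ⟨w, hadj, hlt⟩ := exists_adj_dist_lt G hvx (hc v x)
      have hdv : G.dist v x < n := dist_lt_card G (hc v x)
      have hrw : r v < r w := by
        have h1 : n - G.dist w x ≥ (n - G.dist v x) + 1 := by omega
        have h2 : (n - G.dist w x) * n ≥ ((n - G.dist v x) + 1) * n :=
          Nat.mul_le_mul_right n h1
        have h3 : (e v : ℕ) < n := (e v).2
        simp only [r]
        nlinarith [Nat.zero_le ((e w : ℕ))]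
      have hsub : nbrsBefore G r v ⊆ (G.neighborFinset v).erase w := by
        intro u hu
        obtain ⟨hadju, hru⟩ := (mem_nbrsBefore G).1 hu
        rw [Finset.mem_erase, SimpleGraph.mem_neighborFinset]
        exact ⟨fun hEq => by subst hEq; omega, hadju⟩
      have hwmem : w ∈ G.neighborFinset v := (G.mem_neighborFinset v w).2 hadj
      have hdegv : 1 ≤ G.degree v := by
        rw [← G.card_neighborFinset_eq_degree]
        exact Finset.card_pos.2 ⟨w, hwmem⟩
      calc (nbrsBefore G r v).card ≤ _ := Finset.card_le_card hsub
        _ = G.degree v - 1 := by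
            rw [Finset.card_erase_of_mem hwmem, G.card_neighborFinset_eq_degree]
        _ < k := by have := hdeg v; omega
  exact colorable_of_greedy_lt G hrinj (fun v => lt_of_le_of_lt (greedy_le_card G r v) (hcard v))


/-! ### Reachability avoiding a set of vertices -/

section AR

/-- reachability in `G` avoiding the vertex set `S` -/
def AR (S : Set V) (u v : V) : Prop := ∃ p : G.Walk u v, ∀ z ∈ p.support, z ∉ S

variable {G} {S : Set V} {u v w : V}

lemma AR.start_not_mem (h : AR G S u v) : u ∉ S := by
  obtain ⟨p, hp⟩ := h; exact hp u p.start_mem_support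

lemma AR.end_not_mem (h : AR G S u v) : v ∉ S := by
  obtain ⟨p, hp⟩ := h; exact hp v p.end_mem_support

lemma AR.refl (hu : u ∉ S) : AR G S u u := ⟨SimpleGraph.Walk.nil, by simpa using hu⟩

lemma AR.symm (h : AR G S u v) : AR G S v u := by
  obtain ⟨p, hp⟩ := h
  exact ⟨p.reverse, by simpa [SimpleGraph.Walk.support_reverse] using hp⟩

lemma AR.trans (h1 : AR G S u v) (h2 : AR G S v w) : AR G S u w := by
  obtain ⟨p, hp⟩ := h1
  obtain ⟨q, hq⟩ := h2
  refine ⟨p.append q, fun z hz => ?_⟩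
  rcases (SimpleGraph.Walk.mem_support_append_iff _ _).1 hz with h | h
  · exact hp z h
  · exact hq z h

lemma AR.mono {T : Set V} (hTS : T ⊆ S) (h : AR G S u v) : AR G T u v := by
  obtain ⟨p, hp⟩ := h
  exact ⟨p, fun z hz hzT => hp z hz (hTS hzT)⟩

lemma AR.step (hadj : G.Adj u v) (hu : u ∉ S) (hv : v ∉ S) : AR G S u v :=
  ⟨hadj.toWalk, by
    intro z hz
    simp only [SimpleGraph.Walk.support_cons, SimpleGraph.Walk.support_nil,
      List.mem_cons, List.mem_singleton] at hz
    rcases hz with rfl | hz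
    · exact hu
    · simp at hz; subst hz; exact hv⟩

/-- walks staying in `s` give reachability in the induced graph -/
lemma reachable_induce_of_walk {s : Set V} :
    ∀ {u v : V} (p : G.Walk u v) (_ : ∀ z ∈ p.support, z ∈ s) (hu : u ∈ s) (hv : v ∈ s),
      (G.induce s).Reachable ⟨u, hu⟩ ⟨v, hv⟩ := by
  intro u v p
  induction p with
  | nil => intro _ hu _; rfl
  | @cons a b c hadj q ih =>
    intro hp ha hc
    have hb : b ∈ s := hp b (by simp)
    have h1 : (G.induce s).Adj ⟨a, ha⟩ ⟨b, hb⟩ := by simpa using hadj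
    exact h1.reachable.trans (ih (fun z hz => hp z (by simp [hz])) hb hc)

lemma walk_of_reachable_induce {s : Set V} {u v : V} (hu : u ∈ s) (hv : v ∈ s)
    (h : (G.induce s).Reachable ⟨u, hu⟩ ⟨v, hv⟩) :
    ∃ p : G.Walk u v, ∀ z ∈ p.support, z ∈ s := by
  obtain ⟨P⟩ := h
  refine ⟨P.map (SimpleGraph.Embedding.induce s).toHom, fun z hz => ?_⟩
  erw [SimpleGraph.Walk.support_map, List.mem_map] at hz
  obtain ⟨z', _, rfl⟩ := hz
  exact z'.2

lemma ar_iff_induce_reachable {s : Set V} {u v : V} (hu : u ∈ s) (hv : v ∈ s) :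
    AR G sᶜ u v ↔ (G.induce s).Reachable ⟨u, hu⟩ ⟨v, hv⟩ := by
  constructor
  · rintro ⟨p, hp⟩
    exact reachable_induce_of_walk p (fun z hz => by
      have := hp z hz; simpa using this) hu hv
  · intro h
    obtain ⟨p, hp⟩ := walk_of_reachable_induce hu hv h
    exact ⟨p, fun z hz => by simpa using hp z hz⟩

/-- a walk from inside `T` to outside `T` crosses the boundary -/
lemma walk_boundary {T : Set V} :
    ∀ {u w : V} (p : G.Walk u w), u ∈ T → w ∉ T →
      ∃ a b, a ∈ T ∧ b ∉ T ∧ G.Adj a b ∧ a ∈ p.support ∧ b ∈ p.support := by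
  intro u w p
  induction p with
  | nil => intro h1 h2; exact absurd h1 h2
  | @cons a b c hadj q ih =>
    intro ha hc
    by_cases hb : b ∈ T
    · obtain ⟨a', b', h1, h2, h3, h4, h5⟩ := ih hb hc
      exact ⟨a', b', h1, h2, h3, by simp [SimpleGraph.Walk.support_cons, h4],
        by simp [SimpleGraph.Walk.support_cons, h5]⟩
    · exact ⟨a, b, ha, hb, hadj, by simp, by
        simp [SimpleGraph.Walk.support_cons]⟩

/-- trim a walk so that the endpoint occurs only once, with avoiding prefixes -/
lemma walk_first_hit {u v : V} (p : G.Walk u v) {S : Set V} (hS : ∀ z ∈ p.support, z ∉ S) :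
    ∃ q : G.Walk u v, (∀ z ∈ q.support, z ∉ S) ∧
      ∀ z ∈ q.support, z ≠ v → ∃ r : G.Walk u z, (∀ t ∈ r.support, t ∉ S) ∧ v ∉ r.support := by
  classical
  have hvp : v ∈ p.support := p.end_mem_support
  refine ⟨p.takeUntil v hvp, fun z hz => hS z (p.support_takeUntil_subset hvp hz), ?_⟩
  intro z hz hzv
  set q := p.takeUntil v hvp with hq
  refine ⟨q.takeUntil z hz, fun t ht =>
    hS t (p.support_takeUntil_subset hvp (q.support_takeUntil_subset hz ht)), ?_⟩
  intro hvr
  have hcount : q.support.count v = 1 := p.count_support_takeUntil_eq_one hvp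
  have hsplit : (q.takeUntil z hz).append (q.dropUntil z hz) = q := q.take_spec hz
  have hsup : q.support = (q.takeUntil z hz).support ++ (q.dropUntil z hz).support.tail := by
    rw [← SimpleGraph.Walk.support_append, hsplit]
  have h1 : 1 ≤ (q.takeUntil z hz).support.count v := List.one_le_count_iff.2 hvr
  have h2 : v ∈ (q.dropUntil z hz).support.tail := by
    have hvd : v ∈ (q.dropUntil z hz).support := (q.dropUntil z hz).end_mem_support
    have := (q.dropUntil z hz).support_eq_cons
    rw [this] at hvd
    rcases List.mem_cons.1 hvd with h | h
    · exact absurd h.symm hzv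
    · rw [this]; exact h
  have h3 : 1 ≤ (q.dropUntil z hz).support.tail.count v := List.one_le_count_iff.2 h2
  rw [hsup, List.count_append] at hcount
  omega

end AR


lemma greedy_eq_zero_of_empty {r : V → ℕ} {v : V} (h : nbrsBefore G r v = ∅) :
    greedy G r v = 0 := by
  rw [greedy_def, h]
  simpa using mex_empty

/-- Lovász's trick: given nonadjacent `b c` with common neighbor `a` such that removing
`b, c` leaves the graph connected, `G` is `k`-colorable when all degrees are at most `k`. -/
lemma colorable_of_triple {k : ℕ} (hdeg : ∀ v, G.degree v ≤ k)
    {a b c : V} (hab : G.Adj a b) (hac : G.Adj a c) (hbc : ¬ G.Adj b c) (hbc' : b ≠ c)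
    (hconn : (G.induce ({b, c}ᶜ : Set V)).Connected) : G.Colorable k := by
  classical
  set n := Fintype.card V with hn
  set s : Set V := {b, c}ᶜ with hs
  have hmem : ∀ {v : V}, v ≠ b → v ≠ c → v ∈ s := by
    intro v h1 h2
    simp [hs, h1, h2]
  have hanb : a ≠ b := G.ne_of_adj hab
  have hanc : a ≠ c := G.ne_of_adj hac
  have ha : a ∈ s := hmem hanb hanc
  have hnpos : 0 < n := Fintype.card_pos_iff.2 ⟨a⟩
  haveI : Fintype ↥s := Fintype.ofFinite ↥s
  have hcardle : Fintype.card ↥s ≤ n := Fintype.card_le_of_injective _ Subtype.val_injective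
  let e := Fintype.equivFin V
  let M : ℕ := n * n + n + 2
  let r : V → ℕ := fun v =>
    if hvb : v = b then 0 else if hvc : v = c then 1 else if v = a then M
    else 2 + (n - (G.induce s).dist ⟨v, hmem hvb hvc⟩ ⟨a, ha⟩) * n + (e v : ℕ)
  have hrb : r b = 0 := by simp [r]
  have hrc : r c = 1 := by simp [r, hbc'.symm]
  have hra : r a = M := by simp [r, hanb, hanc]
  have hrmid : ∀ {v : V} (h1 : v ≠ b) (h2 : v ≠ c), v ≠ a →
      r v = 2 + (n - (G.induce s).dist ⟨v, hmem h1 h2⟩ ⟨a, ha⟩) * n + (e v : ℕ) := by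
    intro v h1 h2 h3
    simp [r, h1, h2, h3]
  have hdistbd : ∀ {v : V} (h1 : v ≠ b) (h2 : v ≠ c), v ≠ a →
      1 ≤ (G.induce s).dist ⟨v, hmem h1 h2⟩ ⟨a, ha⟩ ∧
      (G.induce s).dist ⟨v, hmem h1 h2⟩ ⟨a, ha⟩ < n := by
    intro v h1 h2 h3
    have hne : (⟨v, hmem h1 h2⟩ : ↥s) ≠ ⟨a, ha⟩ := by simp [h3]
    have hreach := hconn.preconnected ⟨v, hmem h1 h2⟩ ⟨a, ha⟩
    constructor
    · exact hreach.pos_dist_of_ne hne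
    · exact lt_of_lt_of_le (dist_lt_card _ hreach) hcardle
  have hmidbd : ∀ {v : V} (h1 : v ≠ b) (h2 : v ≠ c), v ≠ a → 2 ≤ r v ∧ r v < M := by
    intro v h1 h2 h3
    obtain ⟨hd1, hd2⟩ := hdistbd h1 h2 h3
    rw [hrmid h1 h2 h3]
    have hev : (e v : ℕ) < n := (e v).2
    constructor
    · omega
    · set t := n - (G.induce s).dist ⟨v, hmem h1 h2⟩ ⟨a, ha⟩ with ht
      have h4 : (t + 1) * n ≤ n * n := Nat.mul_le_mul_right n (by omega)
      rw [add_mul, one_mul] at h4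
      simp only [M]
      omega
  have hMge2 : 2 ≤ M := by simp only [M]; omega
  -- injectivity of the rank function
  have hrinj : Function.Injective r := by
    intro u v huv
    by_cases hub : u = b <;> by_cases hvb : v = b
    · rw [hub, hvb]
    · exfalso; rw [hub, hrb] at huv
      by_cases hvc : v = c
      · rw [hvc, hrc] at huv; omega
      · by_cases hva : v = a
        · rw [hva, hra] at huv; omega
        · have := (hmidbd hvb hvc hva).1; omega
    · exfalso; rw [hvb, hrb] at huv
      by_cases huc : u = c
      · rw [huc, hrc] at huv; omega
      · by_cases hua : u = a
        · rw [hua, hra] at huv; omega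
        · have := (hmidbd hub huc hua).1; omega
    · by_cases huc : u = c <;> by_cases hvc : v = c
      · rw [huc, hvc]
      · exfalso; rw [huc, hrc] at huv
        by_cases hva : v = a
        · rw [hva, hra] at huv; omega
        · have := (hmidbd hvb hvc hva).1; omega
      · exfalso; rw [hvc, hrc] at huv
        by_cases hua : u = a
        · rw [hua, hra] at huv; omega
        · have := (hmidbd hub huc hua).1; omega
      · by_cases hua : u = a <;> by_cases hva : v = a
        · rw [hua, hva]
        · exfalso; rw [hua, hra] at huv
          have := (hmidbd hvb hvc hva).2; omega
        · exfalso; rw [hva, hra] at huv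
          have := (hmidbd hub huc hua).2; omega
        · rw [hrmid hub huc hua, hrmid hvb hvc hva] at huv
          have h1 : (n - (G.induce s).dist ⟨u, hmem hub huc⟩ ⟨a, ha⟩) * n + (e u : ℕ)
              = (n - (G.induce s).dist ⟨v, hmem hvb hvc⟩ ⟨a, ha⟩) * n + (e v : ℕ) := by omega
          have := rank_aux (e u).2 (e v).2 h1
          exact e.injective (Fin.ext this.1)
  -- k is at least 1
  have hk1 : 1 ≤ k := by
    have h1 : 1 ≤ G.degree a := by
      rw [← G.card_neighborFinset_eq_degree]
      exact Finset.card_pos.2 ⟨b, (G.mem_neighborFinset a b).2 hab⟩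
    exact le_trans h1 (hdeg a)
  -- greedy values of b and c are 0
  have hgb : greedy G r b = 0 := by
    apply greedy_eq_zero_of_empty
    rw [Finset.eq_empty_iff_forall_notMem]
    intro w hw
    have := ((mem_nbrsBefore G).1 hw).2
    rw [hrb] at this; omega
  have hgc : greedy G r c = 0 := by
    apply greedy_eq_zero_of_empty
    rw [Finset.eq_empty_iff_forall_notMem]
    intro w hw
    obtain ⟨hadj, hlt⟩ := (mem_nbrsBefore G).1 hw
    rw [hrc] at hlt
    have hwb : w = b := by
      by_contra hwb
      by_cases hwc : w = c
      · subst hwc; omega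
      · by_cases hwa : w = a
        · subst hwa; rw [hra] at hlt; omega
        · have := (hmidbd hwb hwc hwa).1; omega
    rw [hwb] at hadj
    exact hbc hadj.symm
  -- main bound on the greedy coloring
  have hmain : ∀ v, greedy G r v < k := by
    intro v
    by_cases hvb : v = b
    · rw [hvb, hgb]; exact hk1
    · by_cases hvc : v = c
      · rw [hvc, hgc]; exact hk1
      · by_cases hva : v = a
        · rw [hva]
          have hbmem : b ∈ nbrsBefore G r a := (mem_nbrsBefore G).2 ⟨hab, by rw [hrb, hra]; omega⟩
          have hcmem : c ∈ nbrsBefore G r a := (mem_nbrsBefore G).2 ⟨hac, by rw [hrc, hra]; omega⟩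
          have hlt := greedy_lt_card_of_dup G hbmem hcmem hbc' (by rw [hgb, hgc])
          have hsub : nbrsBefore G r a ⊆ G.neighborFinset a := by
            intro w hw
            exact (G.mem_neighborFinset a w).2 ((mem_nbrsBefore G).1 hw).1
          calc greedy G r a < (nbrsBefore G r a).card := hlt
            _ ≤ G.degree a := by
              rw [← G.card_neighborFinset_eq_degree]; exact Finset.card_le_card hsub
            _ ≤ k := hdeg a
        · -- middle vertex: find a later neighbor
          obtain ⟨w', hadj', hlt'⟩ := exists_adj_dist_lt (G.induce s)
            (show (⟨v, hmem hvb hvc⟩ : ↥s) ≠ ⟨a, ha⟩ by simp [hva])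
            (hconn.preconnected ⟨v, hmem hvb hvc⟩ ⟨a, ha⟩)
          obtain ⟨w, hw⟩ := w'
          have hadj : G.Adj v w := by simpa using hadj'
          have hwb : w ≠ b := by intro h; subst h; simp [hs] at hw
          have hwc : w ≠ c := by intro h; subst h; simp [hs] at hw
          have hrvw : r v < r w := by
            by_cases hwa : w = a
            · subst hwa
              rw [hra]
              exact (hmidbd hvb hvc hva).2
            · rw [hrmid hvb hvc hva, hrmid hwb hwc hwa]
              have h0 : (⟨w, hmem hwb hwc⟩ : ↥s) = ⟨w, hw⟩ := rfl
              rw [h0]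
              have hdv := (hdistbd hvb hvc hva).2
              have hdv1 := (hdistbd hvb hvc hva).1
              set dv := (G.induce s).dist ⟨v, hmem hvb hvc⟩ ⟨a, ha⟩
              set dw := (G.induce s).dist ⟨w, hw⟩ ⟨a, ha⟩
              have h2 : n - dw ≥ (n - dv) + 1 := by omega
              have h3 : (n - dw) * n ≥ ((n - dv) + 1) * n := Nat.mul_le_mul_right n h2
              rw [add_mul, one_mul] at h3
              have h4 : (e v : ℕ) < n := (e v).2
              omega
          have hwmem : w ∈ G.neighborFinset v := (G.mem_neighborFinset v w).2 hadj
          have hsub : nbrsBefore G r v ⊆ (G.neighborFinset v).erase w := by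
            intro u hu
            obtain ⟨hadju, hru⟩ := (mem_nbrsBefore G).1 hu
            rw [Finset.mem_erase]
            exact ⟨fun hEq => by subst hEq; omega, (G.mem_neighborFinset v u).2 hadju⟩
          have hdegv : 1 ≤ G.degree v := by
            rw [← G.card_neighborFinset_eq_degree]
            exact Finset.card_pos.2 ⟨w, hwmem⟩
          calc greedy G r v ≤ (nbrsBefore G r v).card := greedy_le_card G r v
            _ ≤ ((G.neighborFinset v).erase w).card := Finset.card_le_card hsub
            _ = G.degree v - 1 := by
                rw [Finset.card_erase_of_mem hwmem, G.card_neighborFinset_eq_degree]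
            _ < k := by have := hdeg v; omega
  exact colorable_of_greedy_lt G hrinj hmain


/-- If `G` is connected with all degrees at most `k` and has a cut vertex, it is `k`-colorable. -/
lemma colorable_of_cutvertex (hc : G.Connected) {k : ℕ} (hdeg : ∀ v, G.degree v ≤ k)
    {x u₀ v₀ : V} (hu₀ : u₀ ≠ x) (hv₀ : v₀ ≠ x) (hsep : ¬ AR G {x} u₀ v₀) : G.Colorable k := by
  classical
  -- the component of `v` in `G - x`
  let C : V → Set V := fun v => {z | AR G {x} v z}
  let S : V → Set V := fun v => C v ∪ {x}
  have hCrefl : ∀ {v : V}, v ≠ x → v ∈ C v := fun hv => AR.refl (by simpa using hv)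
  have hxnotC : ∀ {v : V}, x ∉ C v := fun {v} h => by simpa using h.end_not_mem
  have hCne : ∀ {v z : V}, z ∈ C v → z ≠ x := fun h => by
    intro hzx; exact hxnotC (hzx ▸ h)
  have hCclosed : ∀ {v z w : V}, z ∈ C v → G.Adj z w → w ≠ x → w ∈ C v := by
    intro v z w hz hadj hw
    exact hz.trans (AR.step hadj (by simpa using hCne hz) (by simpa using hw))
  -- every component contains a neighbor of x
  have hxnbr : ∀ {v : V}, v ≠ x → ∃ w, w ∈ C v ∧ G.Adj w x := by
    intro v hv
    obtain ⟨p⟩ := hc v x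
    obtain ⟨z, w, hz, hw, hadj, -, -⟩ := walk_boundary p (hCrefl hv) hxnotC
    have hwx : w = x := by
      by_contra hwx
      exact hw (hCclosed hz hadj hwx)
    exact ⟨z, hz, hwx ▸ hadj⟩
  -- each component set (with x) induces a connected graph
  have hSconn : ∀ {v : V}, v ≠ x → (G.induce (S v)).Connected := by
    intro v hv
    have hvS : v ∈ S v := Or.inl (hCrefl hv)
    apply SimpleGraph.induce_connected_of_patches v hvS
    intro z hz
    refine ⟨S v, le_refl _, hvS, hz, ?_⟩
    rcases hz with hzC | hzx
    · -- z in the component: a walk avoiding x stays in the component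
      obtain ⟨p, hp⟩ := id hzC
      have hsup : ∀ t ∈ p.support, t ∈ S v := by
        intro t ht
        left
        exact ⟨p.takeUntil t ht, fun z' hz' => hp z' (p.support_takeUntil_subset ht hz')⟩
      exact reachable_induce_of_walk p hsup hvS (Or.inl hzC)
    · -- z = x : x is adjacent to a component vertex
      obtain ⟨w, hwC, hadj⟩ := hxnbr hv
      obtain ⟨p, hp⟩ := id hwC
      have hsup : ∀ t ∈ p.support, t ∈ S v := by
        intro t ht
        left
        exact ⟨p.takeUntil t ht, fun z' hz' => hp z' (p.support_takeUntil_subset ht hz')⟩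
      have h1 : (G.induce (S v)).Reachable ⟨v, hvS⟩ ⟨w, Or.inl hwC⟩ :=
        reachable_induce_of_walk p hsup hvS (Or.inl hwC)
      have h2 : (G.induce (S v)).Adj ⟨w, Or.inl hwC⟩ ⟨z, Or.inr hzx⟩ := by
        simp only [SimpleGraph.comap_adj, Function.Embedding.coe_subtype]
        have : z = x := hzx
        rw [this]; exact hadj
      exact h1.trans h2.reachable
  -- k ≥ 1
  obtain ⟨w₀, _, hw₀x⟩ := hxnbr hu₀
  have hk1 : 1 ≤ k := by
    have h1 : 1 ≤ G.degree x := by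
      rw [← G.card_neighborFinset_eq_degree]
      exact Finset.card_pos.2 ⟨w₀, (G.mem_neighborFinset x w₀).2 hw₀x.symm⟩
    exact le_trans h1 (hdeg x)
  -- x has a neighbor outside each component
  have hxout : ∀ {v : V}, v ≠ x → ∃ w', G.Adj x w' ∧ w' ∉ S v := by
    intro v hv
    have hone : ¬ (AR G {x} v u₀ ∧ AR G {x} v v₀) := by
      rintro ⟨h1, h2⟩; exact hsep (h1.symm.trans h2)
    have : ∃ t, t ≠ x ∧ ¬ AR G {x} v t := by
      by_cases h1 : AR G {x} v u₀
      · exact ⟨v₀, hv₀, fun h2 => hone ⟨h1, h2⟩⟩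
      · exact ⟨u₀, hu₀, h1⟩
    obtain ⟨t, htx, htv⟩ := this
    obtain ⟨w', hw'C, hadj'⟩ := hxnbr htx
    refine ⟨w', hadj'.symm, ?_⟩
    rintro (hw' | hw')
    · exact htv (hw'.trans hw'C.symm)
    · exact hCne hw'C hw'
  -- for each component, a proper coloring sending x to 0
  have hcol : ∀ {v : V}, v ≠ x → ∃ f : V → Fin k,
      (∀ z w, z ∈ S v → w ∈ S v → G.Adj z w → f z ≠ f w) ∧ f x = ⟨0, hk1⟩ := by
    intro v hv
    haveI : Fintype ↥(S v) := Fintype.ofFinite _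
    haveI : DecidableRel (G.induce (S v)).Adj := Classical.decRel _
    have hxS : x ∈ S v := Or.inr rfl
    obtain ⟨w', hadj', hw'⟩ := hxout hv
    -- degree bounds in the induced graph
    have hdegle : ∀ z : ↥(S v), (G.induce (S v)).degree z ≤ G.degree (z : V) := by
      intro z
      rw [← SimpleGraph.card_neighborFinset_eq_degree, ← SimpleGraph.card_neighborFinset_eq_degree]
      refine Finset.card_le_card_of_injOn (fun u => (u : V)) ?_ ?_
      · intro u hu
        simp only [Finset.mem_coe, SimpleGraph.mem_neighborFinset] at hu ⊢
        exact hu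
      · intro u1 _ u2 _ h
        exact Subtype.ext h
    have hdegx : (G.induce (S v)).degree ⟨x, hxS⟩ < k := by
      rw [← SimpleGraph.card_neighborFinset_eq_degree]
      have hle : ((G.induce (S v)).neighborFinset ⟨x, hxS⟩).card ≤
          ((G.neighborFinset x).erase w').card := by
        refine Finset.card_le_card_of_injOn (fun u => (u : V)) ?_ ?_
        · intro u hu
          simp only [Finset.mem_coe, SimpleGraph.mem_neighborFinset] at hu
          rw [Finset.mem_coe, Finset.mem_erase]
          refine ⟨fun hEq => hw' (hEq ▸ u.2), ?_⟩
          simp only [SimpleGraph.mem_neighborFinset]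
          exact hu
        · intro u1 _ u2 _ h
          exact Subtype.ext h
      have hcerase : ((G.neighborFinset x).erase w').card = G.degree x - 1 := by
        rw [Finset.card_erase_of_mem ((G.mem_neighborFinset x w').2 hadj'),
          G.card_neighborFinset_eq_degree]
      have hdx := hdeg x
      have hdx1 : 1 ≤ G.degree x := by
        rw [← G.card_neighborFinset_eq_degree]
        exact Finset.card_pos.2 ⟨w', (G.mem_neighborFinset x w').2 hadj'⟩
      omega
    have hcolorable : (G.induce (S v)).Colorable k :=
      colorable_of_exists_small _ (hSconn hv)
        (fun z => le_trans (hdegle z) (hdeg z)) hdegx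
    obtain ⟨Cc⟩ := hcolorable
    let σ : Equiv.Perm (Fin k) := Equiv.swap (Cc ⟨x, hxS⟩) ⟨0, hk1⟩
    refine ⟨fun z => if hz : z ∈ S v then σ (Cc ⟨z, hz⟩) else ⟨0, hk1⟩, ?_, ?_⟩
    · intro z w hz hw hadj
      simp only [dif_pos hz, dif_pos hw]
      have hne : Cc ⟨z, hz⟩ ≠ Cc ⟨w, hw⟩ := by
        apply Cc.valid
        simp only [SimpleGraph.comap_adj, Function.Embedding.coe_subtype]
        exact hadj
      exact fun h => hne (σ.injective h)
    · simp only [dif_pos hxS]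
      exact Equiv.swap_apply_left _ _
  -- choose colorings as a function of the component set only
  let good : Set V → Prop := fun s => ∃ f : V → Fin k,
      (∀ z w, z ∈ s → w ∈ s → G.Adj z w → f z ≠ f w) ∧ f x = ⟨0, hk1⟩
  let F : Set V → (V → Fin k) := fun s => if h : good s then h.choose else fun _ => ⟨0, hk1⟩
  have hF : ∀ {s : Set V}, good s → (∀ z w, z ∈ s → w ∈ s → G.Adj z w → F s z ≠ F s w) ∧
      F s x = ⟨0, hk1⟩ := by
    intro s hgs
    simp only [F, dif_pos hgs]
    exact hgs.choose_spec
  -- adjacent non-x vertices have the same component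
  have hSeq : ∀ {z w : V}, z ≠ x → w ≠ x → G.Adj z w → S z = S w := by
    intro z w hz hw hadj
    have hzw : AR G {x} z w := AR.step hadj (by simpa using hz) (by simpa using hw)
    have : C z = C w := by
      ext t
      exact ⟨fun h => hzw.symm.trans h, fun h => hzw.trans h⟩
    simp only [S, this]
  -- the global coloring
  refine ⟨SimpleGraph.Coloring.mk
    (fun z => if hz : z = x then ⟨0, hk1⟩ else F (S z) z) ?_⟩
  intro z w hadj
  by_cases hz : z = x <;> by_cases hw : w = x
  · exact absurd (hz ▸ hw ▸ hadj) (G.irrefl)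
  · simp only [dif_pos hz, dif_neg hw]
    have hgw : good (S w) := hcol hw
    have h1 := (hF hgw).1 x w (Or.inr rfl) (Or.inl (hCrefl hw)) (hz ▸ hadj)
    rw [(hF hgw).2] at h1
    exact h1
  · simp only [dif_neg hz, dif_pos hw]
    have hgz : good (S z) := hcol hz
    have h1 := (hF hgz).1 z x (Or.inl (hCrefl hz)) (Or.inr rfl) (hw ▸ hadj)
    rw [(hF hgz).2] at h1
    exact h1
  · simp only [dif_neg hz, dif_neg hw]
    rw [hSeq hz hw hadj]
    have hgw : good (S w) := hcol hw
    have hzSw : z ∈ S w := by rw [← hSeq hz hw hadj]; exact Or.inl (hCrefl hz)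
    exact (hF hgw).1 z w hzSw (Or.inl (hCrefl hw)) hadj


/-- Helper: every vertex of a minimal "pendant component" is a non-cutvertex of `G - x`.
Given a separation of `G - x` by a cutvertex `y` with `u, v` in different components,
produce an anchor `y₁` and a component `K = {z | AR {x,y₁} b₀ z}` inside the `u`-side
all of whose vertices `w` leave `G - x - w` connected. -/
lemma min_pair (hnocut : ∀ x : V, ∀ u v : V, u ≠ x → v ≠ x → AR G {x} u v)
    {x y u v : V} (hyx : y ≠ x) (hu : u ∉ ({x, y} : Set V)) (hv : v ∉ ({x, y} : Set V))
    (huv : ¬ AR G ({x, y} : Set V) u v) :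
    ∃ y₁ b₀ : V, y₁ ≠ x ∧ (¬ AR G ({x, y} : Set V) v y₁) ∧ b₀ ∉ ({x, y₁} : Set V) ∧
      (∀ z, AR G ({x, y₁} : Set V) b₀ z → AR G ({x, y} : Set V) u z) ∧
      (∀ w, AR G ({x, y₁} : Set V) b₀ w →
        ∀ z₁ z₂, z₁ ∉ ({x, w} : Set V) → z₂ ∉ ({x, w} : Set V) →
          AR G ({x, w} : Set V) z₁ z₂) := by
  classical
  -- the collection of admissible pairs
  let P : V × V → Prop := fun p =>
    p.1 ≠ x ∧ (¬ AR G ({x, y} : Set V) v p.1) ∧ p.2 ∉ ({x, p.1} : Set V) ∧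
      (∃ z, z ∉ ({x, p.1} : Set V) ∧ ¬ AR G ({x, p.1} : Set V) p.2 z) ∧
      (∀ z, AR G ({x, p.1} : Set V) p.2 z → AR G ({x, y} : Set V) u z)
  let Pairs : Finset (V × V) := Finset.univ.filter P
  have hyu : (y, u) ∈ Pairs := by
    refine Finset.mem_filter.2 ⟨Finset.mem_univ _, hyx, ?_, hu, ⟨v, hv, huv⟩, fun z h => h⟩
    intro h
    exact h.end_not_mem (by simp)
  let m : V × V → ℕ := fun p => (Finset.univ.filter (fun z => AR G ({x, p.1} : Set V) p.2 z)).card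
  obtain ⟨p₁, hp₁mem, hp₁min⟩ := Finset.exists_min_image Pairs m ⟨(y, u), hyu⟩
  obtain ⟨y₁, b₀⟩ := p₁
  obtain ⟨-, hy₁x, hy₁v, hb₀, ⟨z₀, hz₀, hz₀n⟩, hK1C⟩ := Finset.mem_filter.1 hp₁mem
  -- the component of b₀ in G - x - y₁
  set K1 : Set V := {z | AR G ({x, y₁} : Set V) b₀ z} with hK1
  have hb₀K1 : b₀ ∈ K1 := AR.refl hb₀
  have hy₁K1 : y₁ ∉ K1 := fun h => h.end_not_mem (by simp)
  have hxK1 : x ∉ K1 := fun h => h.end_not_mem (by simp)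
  have hK1mem : ∀ {z : V}, z ∈ K1 → z ∉ ({x, y₁} : Set V) := fun h => h.end_not_mem
  refine ⟨y₁, b₀, hy₁x, hy₁v, hb₀, hK1C, ?_⟩
  intro w hwK1 z₁ z₂ hz₁ hz₂ 
  by_contra hn
  have hwx : w ≠ x := fun h => hxK1 (h ▸ hwK1)
  have hwy₁ : w ≠ y₁ := fun h => hy₁K1 (h ▸ hwK1)
  -- every vertex outside K1 (and ≠ x) reaches y₁ in G - x - w
  have hR : ∀ z, z ∉ K1 → z ≠ x → AR G ({x, w} : Set V) z y₁ := by
    intro z hzK1 hzx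
    have hzw : z ≠ w := fun h => hzK1 (h ▸ hwK1)
    by_cases hzy₁ : z = y₁
    · subst hzy₁
      exact AR.refl (by simp [hzx, hzw])
    · obtain ⟨p, hp⟩ := hnocut x z y₁ hzx hy₁x
      obtain ⟨q, hq, hqpre⟩ := walk_first_hit p hp
      refine ⟨q, fun t ht => ?_⟩
      have htx : t ≠ x := by
        have := hq t ht; simpa using this
      have htK1 : t ∉ K1 := by
        intro htK1'
        have hty₁ : t ≠ y₁ := fun h => hy₁K1 (h ▸ htK1')
        obtain ⟨r, hr, hry₁⟩ := hqpre t ht hty₁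
        have hAR : AR G ({x, y₁} : Set V) z t := by
          refine ⟨r, fun t' ht' => ?_⟩
          have h1 : t' ≠ x := by have := hr t' ht'; simpa using this
          have h2 : t' ≠ y₁ := fun h => hry₁ (h ▸ ht')
          simp [h1, h2]
        exact hzK1 (htK1'.trans hAR.symm)
      have htw : t ≠ w := fun h => htK1 (h ▸ hwK1)
      simp [htx, htw]
  -- core: a vertex of K1 other than w that cannot reach y₁ yields a smaller pendant pair
  have hcore : ∀ z', z' ∈ K1 → z' ≠ w → ¬ AR G ({x, w} : Set V) z' y₁ → False := by
    intro z' hz'K1 hz'w hz'y₁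
    have hz'x : z' ≠ x := fun h => hxK1 (h ▸ hz'K1)
    -- K(w, z') is contained in K1 \ {w}
    have hKsub : ∀ t, AR G ({x, w} : Set V) z' t → t ∈ K1 ∧ t ≠ w := by
      intro t ht
      have htnm := ht.end_not_mem
      have htx : t ≠ x := by simpa using fun h => htnm (Or.inl h)
      have htw : t ≠ w := by
        intro h; exact htnm (by simp [h])
      constructor
      · by_contra htK1
        exact hz'y₁ (ht.trans (hR t htK1 htx))
      · exact htw
    -- the new pair is admissible
    have hy₁nm : y₁ ∉ ({x, w} : Set V) := by
      intro hmem
      rcases hmem with h | h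
      · exact hy₁x h
      · exact hwy₁ h.symm
    have hwP : (w, z') ∈ Pairs := by
      refine Finset.mem_filter.2 ⟨Finset.mem_univ _, hwx, ?_, by simp [hz'x, hz'w],
        ⟨y₁, hy₁nm, hz'y₁⟩, ?_⟩
      · -- w is not in the v-side
        intro hARv
        exact huv ((hK1C w hwK1).trans hARv.symm)
      · intro z hz
        exact hK1C z (hKsub z hz).1
    -- but its component is strictly smaller
    have hlt : m (w, z') < m (y₁, b₀) := by
      have hsub : (Finset.univ.filter (fun z => AR G ({x, w} : Set V) z' z)) ⊆
          (Finset.univ.filter (fun z => AR G ({x, y₁} : Set V) b₀ z)).erase w := by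
        intro t ht
        have h1 := (Finset.mem_filter.1 ht).2
        obtain ⟨h2, h3⟩ := hKsub t h1
        exact Finset.mem_erase.2 ⟨h3, Finset.mem_filter.2 ⟨Finset.mem_univ _, h2⟩⟩
      have hwmem : w ∈ (Finset.univ.filter (fun z => AR G ({x, y₁} : Set V) b₀ z)) :=
        Finset.mem_filter.2 ⟨Finset.mem_univ _, hwK1⟩
      calc m (w, z') ≤ _ := Finset.card_le_card hsub
        _ < _ := Finset.card_erase_lt_of_mem hwmem
    exact absurd (hp₁min (w, z') hwP) (by omega)
  -- conclude the contradiction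
  by_cases h1 : z₁ ∈ K1
  · have hz₁w : z₁ ≠ w := by intro h; exact hz₁ (by simp [h])
    by_cases h2 : AR G ({x, w} : Set V) z₁ y₁
    · have h3 : ¬ AR G ({x, w} : Set V) z₂ y₁ := fun h => hn (h2.trans h.symm)
      by_cases h4 : z₂ ∈ K1
      · have hz₂w : z₂ ≠ w := by intro h; exact hz₂ (by simp [h])
        exact hcore z₂ h4 hz₂w h3
      · have hz₂x : z₂ ≠ x := by intro h; exact hz₂ (by simp [h])
        exact h3 (hR z₂ h4 hz₂x)
    · exact hcore z₁ h1 hz₁w h2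
  · have hz₁x : z₁ ≠ x := by intro h; exact hz₁ (by simp [h])
    have h2 : AR G ({x, w} : Set V) z₁ y₁ := hR z₁ h1 hz₁x
    have h3 : ¬ AR G ({x, w} : Set V) z₂ y₁ := fun h => hn (h2.trans h.symm)
    by_cases h4 : z₂ ∈ K1
    · have hz₂w : z₂ ≠ w := by intro h; exact hz₂ (by simp [h])
      exact hcore z₂ h4 hz₂w h3
    · have hz₂x : z₂ ≠ x := by intro h; exact hz₂ (by simp [h])
      exact h3 (hR z₂ h4 hz₂x)

lemma connected_compl_of_ar {D : Set V} (hne : ∃ t, t ∉ D)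
    (h : ∀ u v, u ∉ D → v ∉ D → AR G D u v) : (G.induce Dᶜ).Connected := by
  obtain ⟨t, ht⟩ := hne
  rw [SimpleGraph.connected_iff]
  refine ⟨?_, ⟨⟨t, ht⟩⟩⟩
  rintro ⟨u', hu'⟩ ⟨v', hv'⟩
  have h1 : AR G Dᶜᶜ u' v' := by
    rw [compl_compl]
    exact h u' v' hu' hv'
  exact (ar_iff_induce_reachable hu' hv').1 h1

/-- In a graph with no cutvertex, minimum degree 3, no dominating vertex, there is
a triple `a b c` with `b, c` nonadjacent common neighbors of `a` whose removal
leaves the graph connected. -/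
lemma exists_triple (hc : G.Connected)
    (hnocut : ∀ x : V, ∀ u v : V, u ≠ x → v ≠ x → AR G {x} u v)
    (hdeg3 : ∀ z : V, 3 ≤ G.degree z)
    (hnd : ∀ x : V, ∃ z, z ≠ x ∧ ¬ G.Adj x z) :
    ∃ a b c : V, G.Adj a b ∧ G.Adj a c ∧ ¬ G.Adj b c ∧ b ≠ c ∧
      (G.induce (({b, c} : Set V)ᶜ)).Connected := by
  classical
  by_cases hcase : ∃ x : V, ∀ y, y ≠ x → ∀ u v, u ∉ ({x, y} : Set V) → v ∉ ({x, y} : Set V) →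
      AR G ({x, y} : Set V) u v
  · -- Case I : some x with G - x having no cutvertex
    obtain ⟨x, hx⟩ := hcase
    obtain ⟨z', hz'x, hz'adj⟩ := hnd x
    have hZne : (Finset.univ.filter (fun z => z ≠ x ∧ ¬ G.Adj x z)).Nonempty :=
      ⟨z', Finset.mem_filter.2 ⟨Finset.mem_univ _, hz'x, hz'adj⟩⟩
    obtain ⟨z₀, hz₀mem, hz₀min⟩ :=
      Finset.exists_min_image _ (fun z => G.dist z x) hZne
    obtain ⟨-, hz₀x, hz₀adj⟩ := Finset.mem_filter.1 hz₀mem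
    obtain ⟨w, hadjw, hdw⟩ := exists_adj_dist_lt G hz₀x (hc z₀ x)
    have hwx : w ≠ x := by
      intro h
      rw [h] at hadjw
      exact hz₀adj hadjw.symm
    by_cases hxw : G.Adj x w
    · have hwz₀ : w ≠ z₀ := fun h => G.irrefl (h ▸ hadjw)
      refine ⟨w, x, z₀, hxw.symm, hadjw.symm, fun h => hz₀adj h, fun h => hz₀x h.symm, ?_⟩
      apply connected_compl_of_ar
      · exact ⟨w, by simp [hwx, hwz₀]⟩
      · exact hx z₀ hz₀x
    · have hwmem : w ∈ Finset.univ.filter (fun z => z ≠ x ∧ ¬ G.Adj x z) :=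
        Finset.mem_filter.2 ⟨Finset.mem_univ _, hwx, hxw⟩
      have := hz₀min w hwmem
      omega
  · -- Case II : every vertex deletion leaves a cutvertex
    push_neg at hcase
    have hV : Nonempty V := hc.nonempty
    obtain ⟨x⟩ := hV
    obtain ⟨y, hyx, u, v, hu, hv, huv⟩ := hcase x
    obtain ⟨y₁, b₀, hy₁x, hy₁v, hb₀nm, hK1C, hK1claim⟩ := min_pair G hnocut hyx hu hv huv
    obtain ⟨y₂, c₀, hy₂x, hy₂u, hc₀nm, hK2C, hK2claim⟩ :=
      min_pair G hnocut hyx hv hu (fun h => huv h.symm)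
    set K1 : Set V := {z | AR G ({x, y₁} : Set V) b₀ z} with hK1def
    set K2 : Set V := {z | AR G ({x, y₂} : Set V) c₀ z} with hK2def
    have hb₀K1 : b₀ ∈ K1 := AR.refl hb₀nm
    have hc₀K2 : c₀ ∈ K2 := AR.refl hc₀nm
    have disj : ∀ z, z ∈ K1 → z ∈ K2 → False := by
      intro z h1 h2
      exact huv ((hK1C z h1).trans (hK2C z h2).symm)
    have hK1x : ∀ {z : V}, z ∈ K1 → z ≠ x := by
      intro z h hzx
      exact h.end_not_mem (by simp [hzx])
    have hK2x : ∀ {z : V}, z ∈ K2 → z ≠ x := by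
      intro z h hzx
      exact h.end_not_mem (by simp [hzx])
    have hK1y₁ : ∀ {z : V}, z ∈ K1 → z ≠ y₁ := by
      intro z h hz
      exact h.end_not_mem (by simp [hz])
    have hK2y₂ : ∀ {z : V}, z ∈ K2 → z ≠ y₂ := by
      intro z h hz
      exact h.end_not_mem (by simp [hz])
    have hy₁K2 : y₁ ∉ K2 := fun h => hy₁v (hK2C y₁ h)
    have hy₂K1 : y₂ ∉ K1 := fun h => hy₂u (hK1C y₂ h)
    have hy₁K1 : y₁ ∉ K1 := fun h => hK1y₁ h rfl
    have hy₂K2 : y₂ ∉ K2 := fun h => hK2y₂ h rfl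
    have closure1 : ∀ z z', z ∈ K1 → G.Adj z z' → z' ∉ ({x, y₁} : Set V) → z' ∈ K1 := by
      intro z z' hz hadj hz'
      exact hz.trans (AR.step hadj hz.end_not_mem hz')
    have closure2 : ∀ z z', z ∈ K2 → G.Adj z z' → z' ∉ ({x, y₂} : Set V) → z' ∈ K2 := by
      intro z z' hz hadj hz'
      exact hz.trans (AR.step hadj hz.end_not_mem hz')
    have hvx : v ≠ x := by intro h; exact hv (by simp [h])
    have hux : u ≠ x := by intro h; exact hu (by simp [h])
    -- x has a neighbor b in K1
    have hbex : ∃ b, b ∈ K1 ∧ G.Adj b x := by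
      have hvK1 : v ∉ K1 := fun h => huv (hK1C v h)
      have hvy₁ : v ≠ y₁ := by
        intro h
        exact hy₁v (h ▸ AR.refl hv)
      have hb₀y₁ : b₀ ≠ y₁ := hK1y₁ hb₀K1
      obtain ⟨p, hp⟩ := hnocut y₁ b₀ v hb₀y₁ hvy₁
      obtain ⟨a', b', ha', hb', hadj', _, hbsup⟩ := walk_boundary p hb₀K1 hvK1
      have hb'y₁ : b' ≠ y₁ := by
        intro h
        exact hp b' hbsup (by simp [h])
      have hb'x : b' = x := by
        by_contra hb'x
        exact hb' (closure1 a' b' ha' hadj' (by simp [hb'x, hb'y₁]))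
      exact ⟨a', ha', hb'x ▸ hadj'⟩
    have hcex : ∃ c, c ∈ K2 ∧ G.Adj c x := by
      have huK2 : u ∉ K2 := fun h => huv (hK2C u h).symm
      have huy₂ : u ≠ y₂ := by
        intro h
        exact hy₂u (h ▸ AR.refl hu)
      have hc₀y₂ : c₀ ≠ y₂ := hK2y₂ hc₀K2
      obtain ⟨p, hp⟩ := hnocut y₂ c₀ u hc₀y₂ huy₂
      obtain ⟨a', b', ha', hb', hadj', _, hbsup⟩ := walk_boundary p hc₀K2 huK2
      have hb'y₂ : b' ≠ y₂ := by
        intro h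
        exact hp b' hbsup (by simp [h])
      have hb'x : b' = x := by
        by_contra hb'x
        exact hb' (closure2 a' b' ha' hadj' (by simp [hb'x, hb'y₂]))
      exact ⟨a', ha', hb'x ▸ hadj'⟩
    obtain ⟨b, hbK1, hbx⟩ := hbex
    obtain ⟨c, hcK2, hcx⟩ := hcex
    have hbc' : b ≠ c := fun h => disj b hbK1 (h ▸ hcK2)
    have hcy₁ : c ≠ y₁ := fun h => hy₁K2 (h ▸ hcK2)
    have hby₂ : b ≠ y₂ := fun h => hy₂K1 (h ▸ hbK1)
    have hbc : ¬ G.Adj b c := by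
      intro hadj
      exact disj c (closure1 b c hbK1 hadj (by simp [hK2x hcK2, hcy₁])) hcK2
    have hbx' : b ≠ x := hK1x hbK1
    have hcx' : c ≠ x := hK2x hcK2
    have hy₂b : y₂ ≠ b := fun h => hy₂K1 (h ▸ hbK1)
    have hy₂c : y₂ ≠ c := fun h => hy₂K2 (h ▸ hcK2)
    have hy₁b : y₁ ≠ b := fun h => hy₁K1 (h ▸ hbK1)
    have hy₁c : y₁ ≠ c := fun h => hy₁K2 (h ▸ hcK2)
    -- K2 side reaches y₂ avoiding x, b, c
    have s1 : ∀ z, z ∈ K2 → z ≠ c → AR G ({x, b, c} : Set V) z y₂ := by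
      intro z hz hzc
      have h1 : AR G ({x, c} : Set V) z y₂ :=
        hK2claim c hcK2 z y₂ (by simp [hK2x hz, hzc]) (by simp [hy₂x, hy₂c])
      obtain ⟨p, hp⟩ := h1
      obtain ⟨q, hq, hqpre⟩ := walk_first_hit p hp
      refine ⟨q, fun t ht => ?_⟩
      have htx : t ≠ x := by have := hq t ht; simp at this; exact this.1
      have htc : t ≠ c := by have := hq t ht; simp at this; exact this.2
      have htb : t ≠ b := by
        intro htb
        subst htb
        obtain ⟨r, hr, hry₂⟩ := hqpre t ht hby₂
        have hARzb : AR G ({x, y₂} : Set V) z t := by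
          refine ⟨r, fun t' ht' => ?_⟩
          have h2 : t' ≠ x := by have := hr t' ht'; simp at this; exact this.1
          have h3 : t' ≠ y₂ := fun h => hry₂ (h ▸ ht')
          simp [h2, h3]
        exact disj t hbK1 (hz.trans hARzb)
      simp [htx, htb, htc]
    -- K1 side reaches y₁ avoiding x, b, c
    have s2 : ∀ z, z ∈ K1 → z ≠ b → AR G ({x, b, c} : Set V) z y₁ := by
      intro z hz hzb
      have h1 : AR G ({x, b} : Set V) z y₁ :=
        hK1claim b hbK1 z y₁ (by simp [hK1x hz, hzb]) (by simp [hy₁x, hy₁b])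
      obtain ⟨p, hp⟩ := h1
      obtain ⟨q, hq, hqpre⟩ := walk_first_hit p hp
      refine ⟨q, fun t ht => ?_⟩
      have htx : t ≠ x := by have := hq t ht; simp at this; exact this.1
      have htb : t ≠ b := by have := hq t ht; simp at this; exact this.2
      have htc : t ≠ c := by
        intro htc
        subst htc
        obtain ⟨r, hr, hry₁⟩ := hqpre t ht (fun h => hy₁c h.symm)
        have hARzc : AR G ({x, y₁} : Set V) z t := by
          refine ⟨r, fun t' ht' => ?_⟩
          have h2 : t' ≠ x := by have := hr t' ht'; simp at this; exact this.1
          have h3 : t' ≠ y₁ := fun h => hry₁ (h ▸ ht')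
          simp [h2, h3]
        exact disj t (hz.trans hARzc) hcK2
      simp [htx, htb, htc]
    -- vertices outside K1 ∪ K2 reach y₂ avoiding x, b, c
    have s3 : ∀ z, z ∉ K1 → z ∉ K2 → z ∉ ({x, b, c} : Set V) →
        AR G ({x, b, c} : Set V) z y₂ := by
      intro z hzK1 hzK2 hznm
      have hzx : z ≠ x := by intro h; exact hznm (by simp [h])
      have hzb : z ≠ b := by intro h; exact hznm (by simp [h])
      have h1 : AR G ({x, b} : Set V) z y₂ :=
        hK1claim b hbK1 z y₂ (by simp [hzx, hzb]) (by simp [hy₂x, hy₂b])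
      obtain ⟨p, hp⟩ := h1
      obtain ⟨q, hq, hqpre⟩ := walk_first_hit p hp
      refine ⟨q, fun t ht => ?_⟩
      have htx : t ≠ x := by have := hq t ht; simp at this; exact this.1
      have htb : t ≠ b := by have := hq t ht; simp at this; exact this.2
      have htc : t ≠ c := by
        intro htc
        subst htc
        obtain ⟨r, hr, hry₂⟩ := hqpre t ht (fun h => hy₂c h.symm)
        have hARzc : AR G ({x, y₂} : Set V) z t := by
          refine ⟨r, fun t' ht' => ?_⟩
          have h2 : t' ≠ x := by have := hr t' ht'; simp at this; exact this.1
          have h3 : t' ≠ y₂ := fun h => hry₂ (h ▸ ht')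
          simp [h2, h3]
        exact hzK2 (hcK2.trans hARzc.symm)
      simp [htx, htb, htc]
    have s4 : AR G ({x, b, c} : Set V) y₁ y₂ :=
      s3 y₁ hy₁K1 hy₁K2 (by simp [hy₁x, hy₁b, hy₁c])
    have sAll : ∀ z, z ∉ ({x, b, c} : Set V) → AR G ({x, b, c} : Set V) z y₂ := by
      intro z hz
      by_cases h1 : z ∈ K2
      · exact s1 z h1 (by intro h; exact hz (by simp [h]))
      · by_cases h2 : z ∈ K1
        · exact (s2 z h2 (by intro h; exact hz (by simp [h]))).trans s4
        · exact s3 z h2 h1 hz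
    -- x has a third neighbor
    have htex : ∃ t, G.Adj x t ∧ t ≠ b ∧ t ≠ c := by
      have h2 : (G.neighborFinset x).card - ({b, c} : Finset V).card ≤
          (G.neighborFinset x \ ({b, c} : Finset V)).card := Finset.le_card_sdiff _ _
      have h3 : ({b, c} : Finset V).card ≤ 2 :=
        (Finset.card_insert_le _ _).trans (by simp)
      have h4 := hdeg3 x
      rw [G.card_neighborFinset_eq_degree] at h2
      have h1 : 0 < (G.neighborFinset x \ ({b, c} : Finset V)).card := by omega
      obtain ⟨t, hmem⟩ := Finset.card_pos.1 h1
      rw [Finset.mem_sdiff, SimpleGraph.mem_neighborFinset] at hmem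
      refine ⟨t, hmem.1, ?_, ?_⟩
      · intro h; exact hmem.2 (by simp [h])
      · intro h; exact hmem.2 (by simp [h])
    obtain ⟨t, hxt, htb, htc⟩ := htex
    have hreach : ∀ z, z ∉ ({b, c} : Set V) → AR G ({b, c} : Set V) z y₂ := by
      intro z hz
      by_cases hzx : z = x
      · subst hzx
        have htx : t ≠ z := fun h => G.irrefl (h ▸ hxt)
        have h1 : AR G ({b, c} : Set V) z t :=
          AR.step hxt (by simpa using hz) (by simp [htb, htc])
        have h2 : AR G ({b, c} : Set V) t y₂ :=
          (sAll t (by simp [htx, htb, htc])).mono (by intro a ha; simp at ha ⊢; tauto)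
        exact h1.trans h2
      · have h3 : z ∉ ({x, b, c} : Set V) := by
          intro h
          rcases h with h | h
          · exact hzx h
          · exact hz h
        exact (sAll z h3).mono (by intro a ha; simp at ha ⊢; tauto)
    refine ⟨x, b, c, hbx.symm, hcx.symm, hbc, hbc', ?_⟩
    apply connected_compl_of_ar
    · exact ⟨x, by simp [hbx'.symm, hcx'.symm]⟩
    · intro u' v' hu' hv'
      exact (hreach u' hu').trans (hreach v' hv').symm


lemma mod_succ_eq {n i j : ℕ} (hi : i < n) (hj : j < n) :
    (i + 1) % n = j ↔ (j = i + 1 ∨ (i = n - 1 ∧ j = 0)) := by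
  by_cases h : i + 1 < n
  · rw [Nat.mod_eq_of_lt h]; omega
  · have h2 : i + 1 = n := by omega
    rw [h2, Nat.mod_self]; omega

lemma fin_sub_val_one {n : ℕ} (hn : 2 ≤ n) (u v : Fin n) :
    (u - v).val = 1 ↔ u.val = (v.val + 1) % n := by
  have hu := u.2
  have hv := v.2
  rw [Fin.sub_def]
  simp only []
  by_cases hvy : v.val + 1 < n
  · rw [Nat.mod_eq_of_lt hvy]
    by_cases hle : v.val ≤ u.val
    · have h1 : n - v.val + u.val = n + (u.val - v.val) := by omega
      rw [h1, Nat.add_mod_left, Nat.mod_eq_of_lt (by omega)]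
      omega
    · have h1 : n - v.val + u.val < n := by omega
      rw [Nat.mod_eq_of_lt h1]
      omega
  · have h0 : v.val + 1 = n := by omega
    rw [h0, Nat.mod_self]
    have h2 : n - v.val = 1 := by omega
    rw [h2, Nat.add_comm 1 u.val]
    by_cases hun : u.val + 1 < n
    · rw [Nat.mod_eq_of_lt hun]; omega
    · have h3 : u.val + 1 = n := by omega
      rw [h3, Nat.mod_self]; omega

/-- A connected 2-regular graph is isomorphic to a cycle graph. -/
lemma iso_cycle_of_two_regular (hc : G.Connected) (hreg : ∀ v, G.degree v = 2) :
    ∃ N, 3 ≤ N ∧ N = Fintype.card V ∧ Nonempty (G ≃g SimpleGraph.cycleGraph N) := by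
  classical
  have hV : Nonempty V := hc.nonempty
  set n := Fintype.card V with hn
  obtain ⟨v₀⟩ := hV
  have hnbr : ∀ w : V, ∃ z, G.Adj w z := by
    intro w
    have h1 : 0 < (G.neighborFinset w).card := by
      rw [G.card_neighborFinset_eq_degree, hreg]; omega
    obtain ⟨z, hz⟩ := Finset.card_pos.1 h1
    exact ⟨z, (G.mem_neighborFinset w z).1 hz⟩
  obtain ⟨a₀, ha₀⟩ := hnbr v₀
  -- uniqueness of the second neighbor
  have key : ∀ {w z z' u : V}, G.Adj w z → G.Adj w z' → G.Adj w u → z ≠ u → z' ≠ u →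
      z = z' := by
    intro w z z' u h1 h2 h3 h4 h5
    by_contra hne
    have hsub : ({u, z, z'} : Finset V) ⊆ G.neighborFinset w := by
      intro t ht
      rw [SimpleGraph.mem_neighborFinset]
      simp only [Finset.mem_insert, Finset.mem_singleton] at ht
      rcases ht with rfl | rfl | rfl
      · exact h3
      · exact h1
      · exact h2
    have hcard : ({u, z, z'} : Finset V).card = 3 := by
      rw [Finset.card_insert_of_notMem (by simp [h4.symm, h5.symm]),
        Finset.card_insert_of_notMem (by simp [hne]), Finset.card_singleton]
    have h6 := Finset.card_le_card hsub
    rw [hcard, G.card_neighborFinset_eq_degree, hreg] at h6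
    omega
  -- the "other neighbor" function
  let otherF : V → V → V := fun u w => if h : ∃ z, G.Adj w z ∧ z ≠ u then h.choose else u
  have hother : ∀ {u w : V}, G.Adj u w → G.Adj w (otherF u w) ∧ otherF u w ≠ u := by
    intro u w h
    have hex : ∃ z, G.Adj w z ∧ z ≠ u := by
      have h1 : 1 ≤ ((G.neighborFinset w).erase u).card := by
        rw [Finset.card_erase_of_mem ((G.mem_neighborFinset w u).2 h.symm),
          G.card_neighborFinset_eq_degree, hreg]
      obtain ⟨z, hz⟩ := Finset.card_pos.1 h1
      rw [Finset.mem_erase, SimpleGraph.mem_neighborFinset] at hz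
      exact ⟨z, hz.2, hz.1⟩
    simp only [otherF, dif_pos hex]
    exact hex.choose_spec
  have huniq : ∀ {u w z : V}, G.Adj u w → G.Adj w z → z ≠ u → z = otherF u w := by
    intro u w z h1 h2 h3
    exact key h2 (hother h1).1 h1.symm h3 (hother h1).2
  -- the traversal sequence
  let g : ℕ → V × V := fun k => Nat.rec (v₀, a₀) (fun _ p => (p.2, otherF p.1 p.2)) k
  let f : ℕ → V := fun k => (g k).1
  have hf0 : f 0 = v₀ := rfl
  have hf1 : f 1 = a₀ := rfl
  have hfss : ∀ k, f (k + 2) = otherF (f k) (f (k + 1)) := fun k => rfl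
  have hadjf : ∀ k, G.Adj (f k) (f (k + 1)) := by
    intro k
    induction k with
    | zero => exact ha₀
    | succ k ih =>
      rw [hfss k]
      exact (hother ih).1
  have hne2 : ∀ k, f (k + 2) ≠ f k := by
    intro k
    rw [hfss k]
    exact (hother (hadjf k)).2
  have hback : ∀ k, f k = otherF (f (k + 2)) (f (k + 1)) := by
    intro k
    exact huniq (hadjf (k + 1)).symm (hadjf k).symm (fun h => hne2 k h.symm)
  -- pigeonhole: a repetition exists
  have hexrep : ∃ k, 0 < k ∧ ∃ j, j < k ∧ f j = f k := by
    have hni : ¬ Function.Injective (fun i : Fin (n + 1) => f i.val) := by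
      intro hinj
      have := Fintype.card_le_of_injective _ hinj
      simp only [Fintype.card_fin] at this
      omega
    rw [Function.not_injective_iff] at hni
    obtain ⟨i, j, hfij, hij⟩ := hni
    rcases lt_or_gt_of_ne (fun h : i.val = j.val => hij (Fin.ext h)) with h | h
    · exact ⟨j.val, by omega, i.val, h, hfij⟩
    · exact ⟨i.val, by omega, j.val, h, hfij.symm⟩
  set N := Nat.find hexrep with hNdef
  obtain ⟨hNpos, j, hjN, hjf⟩ := Nat.find_spec hexrep
  rw [← hNdef] at hNpos hjN hjf
  have hinjN : ∀ i j', i < j' → j' < N → f i ≠ f j' := by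
    intro i j' h1 h2 heq
    exact Nat.find_min hexrep h2 ⟨by omega, i, h1, heq⟩
  have hjne : j ≠ N - 1 := by
    intro h
    have h1 := hadjf (N - 1)
    rw [show N - 1 + 1 = N by omega] at h1
    rw [h] at hjf
    exact G.ne_of_adj h1 hjf
  have hN3 : 3 ≤ N := by
    by_contra hlt
    push_neg at hlt
    have h12 : N = 1 ∨ N = 2 := by omega
    rcases h12 with h | h
    · have hj : j = 0 := by omega
      rw [hj, h] at hjf
      exact G.ne_of_adj (hadjf 0) hjf
    · have hj : j = 0 ∨ j = 1 := by omega
      rcases hj with hj | hj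
      · rw [hj, h] at hjf
        exact hne2 0 hjf.symm
      · exact hjne (by omega)
  -- the first repetition closes the cycle: j = 0
  have hj0 : j = 0 := by
    by_contra hj0
    have hjpos : 0 < j := by omega
    have hadjN : G.Adj (f j) (f (N - 1)) := by
      have h1 := hadjf (N - 1)
      rw [show N - 1 + 1 = N by omega, ← hjf] at h1
      exact h1.symm
    by_cases hcase1 : f (N - 1) = f (j - 1)
    · -- descend to f 0 = f (N - j)
      have hdesc : ∀ d, d ≤ j - 1 → f (j - 1 - d) = f (N - 1 - d) ∧ f (j - d) = f (N - d) := by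
        intro d
        induction d with
        | zero => exact fun _ => ⟨hcase1.symm, hjf⟩
        | succ d ih =>
          intro hd
          obtain ⟨h1, h2⟩ := ih (by omega)
          constructor
          · have e1 : f (j - 1 - (d + 1)) = otherF (f (j - 1 - (d + 1) + 2))
                (f (j - 1 - (d + 1) + 1)) := hback _
            have e2 : f (N - 1 - (d + 1)) = otherF (f (N - 1 - (d + 1) + 2))
                (f (N - 1 - (d + 1) + 1)) := hback _
            rw [e1, e2, show j - 1 - (d + 1) + 2 = j - d by omega,
              show j - 1 - (d + 1) + 1 = j - 1 - d by omega,
              show N - 1 - (d + 1) + 2 = N - d by omega,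
              show N - 1 - (d + 1) + 1 = N - 1 - d by omega, h1, h2]
          · rw [show j - (d + 1) = j - 1 - d by omega, show N - (d + 1) = N - 1 - d by omega]
            exact h1
      have hfin := (hdesc (j - 1) (le_refl _)).2
      rw [show j - (j - 1) = 1 by omega] at hfin
      have hfin2 := (hdesc (j - 1) (le_refl _)).1
      rw [show j - 1 - (j - 1) = 0 by omega] at hfin2
      exact hinjN 0 (N - 1 - (j - 1)) (by omega) (by omega) hfin2
    · -- f (N-1) = f (j+1), contradicting minimality
      have heq : f (N - 1) = f (j + 1) := by
        have h1 : f (N - 1) = otherF (f (j - 1)) (f j) := by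
          apply huniq _ hadjN hcase1
          have h2 := hadjf (j - 1)
          rw [show j - 1 + 1 = j by omega] at h2
          exact h2
        have h2 : f (j + 1) = otherF (f (j - 1)) (f j) := by
          have h3 := hfss (j - 1)
          rw [show j - 1 + 2 = j + 1 by omega, show j - 1 + 1 = j by omega] at h3
          exact h3
        rw [h1, ← h2]
      have hj1 : j + 1 ≠ N - 1 := by
        intro h
        have h1 := hne2 j
        rw [show j + 2 = N by omega] at h1
        exact h1 hjf.symm
      have hj2 : j + 1 < N - 1 := by omega
      exact hinjN (j + 1) (N - 1) hj2 (by omega) heq.symm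
  rw [hj0] at hjf
  -- f N = f 0 ; the wrap-around adjacency
  have hfN1 : G.Adj (f 0) (f (N - 1)) := by
    have h1 := hadjf (N - 1)
    rw [show N - 1 + 1 = N by omega, ← hjf] at h1
    exact h1.symm
  have h1N1 : f 1 ≠ f (N - 1) := hinjN 1 (N - 1) (by omega) (by omega)
  -- classification of neighbors
  have hclass0 : ∀ z, G.Adj (f 0) z → z = f 1 ∨ z = f (N - 1) := by
    intro z hz
    by_cases h : z = f 1
    · exact Or.inl h
    · exact Or.inr (key hz hfN1 (hadjf 0) h h1N1.symm)
  have hclassi : ∀ i z, 0 < i → i < N → G.Adj (f i) z → z = f (i - 1) ∨ z = f (i + 1) := by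
    intro i z hi hiN hz
    by_cases h : z = f (i - 1)
    · exact Or.inl h
    · right
      have h1 : G.Adj (f (i - 1)) (f i) := by
        have h2 := hadjf (i - 1)
        rw [show i - 1 + 1 = i by omega] at h2
        exact h2
      have h2 : z = otherF (f (i - 1)) (f i) := huniq h1 hz h
      have h3 := hfss (i - 1)
      rw [show i - 1 + 2 = i + 1 by omega, show i - 1 + 1 = i by omega] at h3
      rw [h2, ← h3]
  -- surjectivity: every vertex is an f-value
  have hsur : ∀ t : V, ∃ i, i < N ∧ f i = t := by
    intro t
    by_contra ht
    push_neg at ht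
    have hf0mem : f 0 ∈ {z | ∃ i, i < N ∧ f i = z} := ⟨0, by omega, rfl⟩
    have htmem : t ∉ {z | ∃ i, i < N ∧ f i = z} := by
      rintro ⟨i, hi, hfi⟩
      exact ht i hi hfi
    obtain ⟨p⟩ := hc (f 0) t
    obtain ⟨a', b', ha', hb', hadj', -, -⟩ := walk_boundary p hf0mem htmem
    obtain ⟨i, hiN, hfi⟩ := ha'
    apply hb'
    subst hfi
    rcases Nat.eq_zero_or_pos i with rfl | hipos
    · rcases hclass0 b' hadj' with h | h
      · exact ⟨1, by omega, h.symm⟩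
      · exact ⟨N - 1, by omega, h.symm⟩
    · rcases hclassi i b' hipos hiN hadj' with h | h
      · exact ⟨i - 1, by omega, h.symm⟩
      · rcases Nat.lt_or_ge (i + 1) N with h2 | h2
        · exact ⟨i + 1, h2, h.symm⟩
        · have h3 : i + 1 = N := by omega
          rw [h, h3, ← hjf]
          exact ⟨0, by omega, rfl⟩
  -- the bijection
  let φ : Fin N → V := fun i => f i.val
  have hφinj : Function.Injective φ := by
    intro i j' h
    rcases lt_trichotomy i.val j'.val with h1 | h1 | h1
    · exact absurd h (hinjN i.val j'.val h1 j'.2)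
    · exact Fin.ext h1
    · exact absurd h.symm (hinjN j'.val i.val h1 i.2)
  have hφbij : Function.Bijective φ := by
    refine ⟨hφinj, fun t => ?_⟩
    obtain ⟨i, hiN, hfi⟩ := hsur t
    exact ⟨⟨i, hiN⟩, hfi⟩
  have hNn : N = n := by
    rw [hn, ← Fintype.card_fin N]
    exact Fintype.card_of_bijective hφbij
  -- adjacency transfer
  have hstep : ∀ m, m < N → G.Adj (f m) (f ((m + 1) % N)) := by
    intro m hm
    rcases Nat.lt_or_ge (m + 1) N with h | h
    · rw [Nat.mod_eq_of_lt h]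
      exact hadjf m
    · have h1 : m + 1 = N := by omega
      rw [h1, Nat.mod_self, show m = N - 1 by omega]
      exact hfN1.symm
  have hMain : ∀ i j' : Fin N, (SimpleGraph.cycleGraph N).Adj i j' ↔ G.Adj (φ i) (φ j') := by
    intro i j'
    rw [SimpleGraph.cycleGraph_adj']
    constructor
    · intro h
      rcases h with h | h
      · rw [fin_sub_val_one (by omega) i j'] at h
        have := hstep j'.val j'.2
        rw [← h] at this
        exact this.symm
      · rw [fin_sub_val_one (by omega) j' i] at h
        have := hstep i.val i.2
        rw [← h] at this
        exact this
    · intro h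
      have hval : ∀ a b : ℕ, ∀ (ha : a < N) (hb : b < N), f a = f b → a = b := by
        intro a b ha hb hab
        have h9 : φ ⟨a, ha⟩ = φ ⟨b, hb⟩ := hab
        exact congrArg Fin.val (hφinj h9)
      rcases Nat.eq_zero_or_pos i.val with hi0 | hipos
      · have h' : G.Adj (f 0) (φ j') := by
          rw [show (0 : ℕ) = i.val from hi0.symm]
          exact h
        rcases hclass0 (φ j') h' with h1 | h1
        · right
          rw [fin_sub_val_one (by omega) j' i, hi0]
          have h2 : j'.val = 1 := hval j'.val 1 j'.2 (by omega) h1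
          rw [h2, Nat.mod_eq_of_lt (by omega)]
        · left
          rw [fin_sub_val_one (by omega) i j', hi0]
          have h2 : j'.val = N - 1 := hval j'.val (N - 1) j'.2 (by omega) h1
          rw [h2, show N - 1 + 1 = N by omega, Nat.mod_self]
      · rcases hclassi i.val (φ j') hipos i.2 h with h1 | h1
        · left
          rw [fin_sub_val_one (by omega) i j']
          have h2 : j'.val = i.val - 1 := hval j'.val (i.val - 1) j'.2 (by omega) h1
          rw [h2, Nat.mod_eq_of_lt (by omega)]
          omega
        · right
          rw [fin_sub_val_one (by omega) j' i]
          rcases Nat.lt_or_ge (i.val + 1) N with h2 | h2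
          · have h3 : j'.val = i.val + 1 := hval j'.val (i.val + 1) j'.2 h2 h1
            rw [h3, Nat.mod_eq_of_lt h2]
          · have h3 : i.val + 1 = N := by omega
            rw [h3, ← hjf] at h1
            have h4 : j'.val = 0 := hval j'.val 0 j'.2 (by omega) h1
            rw [h4, h3, Nat.mod_self]
  let e : V ≃ Fin N := (Equiv.ofBijective φ hφbij).symm
  refine ⟨N, hN3, hNn, ⟨⟨e, ?_⟩⟩⟩
  intro a b
  have ha : φ (e a) = a := (Equiv.ofBijective φ hφbij).apply_symm_apply a
  have hb : φ (e b) = b := (Equiv.ofBijective φ hφbij).apply_symm_apply b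
  exact (hMain (e a) (e b)).trans (by rw [ha, hb])


lemma colorable_two_of_even_cycle {N : ℕ} (hN : 2 ≤ N) (hEven : Even N)
    (iso : G ≃g SimpleGraph.cycleGraph N) : G.Colorable 2 := by
  have hcol : (SimpleGraph.cycleGraph N).Colorable 2 := by
    refine ⟨SimpleGraph.Coloring.mk (fun i => ⟨i.val % 2, by omega⟩) ?_⟩
    intro u v hadj
    rw [SimpleGraph.cycleGraph_adj'] at hadj
    simp only [ne_eq, Fin.mk.injEq]
    obtain ⟨m, hm⟩ := hEven
    have hu := u.2
    have hv := v.2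
    rcases hadj with h | h
    · rw [fin_sub_val_one hN u v] at h
      by_cases h2 : v.val + 1 < N
      · rw [Nat.mod_eq_of_lt h2] at h
        omega
      · have h3 : v.val + 1 = N := by omega
        rw [h3, Nat.mod_self] at h
        omega
    · rw [fin_sub_val_one hN v u] at h
      by_cases h2 : u.val + 1 < N
      · rw [Nat.mod_eq_of_lt h2] at h
        omega
      · have h3 : u.val + 1 = N := by omega
        rw [h3, Nat.mod_self] at h
        omega
  exact SimpleGraph.Colorable.of_hom iso.toHom hcol

/-- Brooks' theorem, `Colorable` version. -/
theorem brooks_colorable (hconn : G.Connected) (hnotcomplete : G ≠ ⊤)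
    (hnotoddcycle : ¬ ∃ m : ℕ, Odd m ∧ 3 ≤ m ∧ Nonempty (G ≃g SimpleGraph.cycleGraph m)) :
    G.Colorable G.maxDegree := by
  classical
  haveI hne : Nonempty V := hconn.nonempty
  set n := Fintype.card V with hn
  have hnontriv : ∃ v w : V, v ≠ w := by
    by_contra hsub
    push_neg at hsub
    apply hnotcomplete
    ext v w
    simp only [SimpleGraph.top_adj]
    constructor
    · intro h; exact G.ne_of_adj h
    · intro h; exact absurd (hsub v w) h
  obtain ⟨v₁, w₁, hvw₁⟩ := hnontriv
  have hΔ1 : 1 ≤ G.maxDegree := by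
    obtain ⟨p⟩ := hconn v₁ w₁
    cases p with
    | nil => exact absurd rfl hvw₁
    | cons hadj q =>
      calc 1 ≤ G.degree v₁ := by
            rw [← G.card_neighborFinset_eq_degree]
            exact Finset.card_pos.2 ⟨_, (G.mem_neighborFinset _ _).2 hadj⟩
        _ ≤ _ := G.degree_le_maxDegree v₁
  by_cases hreg : ∀ v, G.degree v = G.maxDegree
  · -- the regular case
    by_cases hΔ2 : G.maxDegree ≤ 2
    · by_cases hΔeq1 : G.maxDegree = 1
      · -- Δ = 1 : G is an edge, hence complete
        exfalso
        apply hnotcomplete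
        have huniq : ∀ z a b : V, G.Adj z a → G.Adj z b → a = b := by
          intro z a b ha hb
          have h1 : (G.neighborFinset z).card ≤ 1 := by
            rw [G.card_neighborFinset_eq_degree, hreg z, hΔeq1]
          exact Finset.card_le_one.1 h1 a ((G.mem_neighborFinset z a).2 ha)
            b ((G.mem_neighborFinset z b).2 hb)
        have hd1 : 0 < (G.neighborFinset v₁).card := by
          rw [G.card_neighborFinset_eq_degree, hreg v₁, hΔeq1]
          omega
        obtain ⟨u, hu⟩ := Finset.card_pos.1 hd1
        have hadjvu : G.Adj v₁ u := (G.mem_neighborFinset v₁ u).1 hu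
        have hT : ∀ t : V, t = v₁ ∨ t = u := by
          by_contra hT
          push_neg at hT
          obtain ⟨t, ht1, ht2⟩ := hT
          have hv₁mem : v₁ ∈ {z : V | z = v₁ ∨ z = u} := Or.inl rfl
          have htmem : t ∉ {z : V | z = v₁ ∨ z = u} := by
            rintro (h | h)
            · exact ht1 h
            · exact ht2 h
          obtain ⟨p⟩ := hconn v₁ t
          obtain ⟨a', b', ha', hb', hadj', -, -⟩ := walk_boundary p hv₁mem htmem
          rcases ha' with rfl | rfl
          · exact hb' (Or.inr (huniq a' u b' hadjvu hadj').symm)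
          · exact hb' (Or.inl (huniq a' v₁ b' hadjvu.symm hadj').symm)
        ext a b
        simp only [SimpleGraph.top_adj]
        constructor
        · exact fun h => G.ne_of_adj h
        · intro hab
          rcases hT a with rfl | rfl <;> rcases hT b with rfl | rfl
          · exact absurd rfl hab
          · exact hadjvu
          · exact hadjvu.symm
          · exact absurd rfl hab
      · -- Δ = 2 : G is a cycle
        have hΔeq2 : G.maxDegree = 2 := by omega
        have hreg2 : ∀ v, G.degree v = 2 := fun v => by rw [hreg v, hΔeq2]
        obtain ⟨N, hN3, hNcard, ⟨iso⟩⟩ := iso_cycle_of_two_regular G hconn hreg2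
        rcases Nat.even_or_odd N with hEv | hOdd
        · rw [hΔeq2]
          exact colorable_two_of_even_cycle G (by omega) hEv iso
        · exact absurd ⟨N, hOdd, hN3, ⟨iso⟩⟩ hnotoddcycle
    · -- Δ ≥ 3
      have hΔ3 : 3 ≤ G.maxDegree := by omega
      by_cases hcut : ∀ x u v : V, u ≠ x → v ≠ x → AR G {x} u v
      · -- no cutvertex : use the triple
        have hnd : ∀ x : V, ∃ z, z ≠ x ∧ ¬ G.Adj x z := by
          intro x
          by_contra hd
          push_neg at hd
          apply hnotcomplete
          have hdeg : ∀ v, G.degree v = n - 1 := by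
            have hx : G.degree x = n - 1 := by
              have hnb : G.neighborFinset x = Finset.univ.erase x := by
                ext z
                rw [SimpleGraph.mem_neighborFinset, Finset.mem_erase]
                constructor
                · intro h
                  exact ⟨(G.ne_of_adj h).symm, Finset.mem_univ _⟩
                · intro h
                  exact hd z h.1
              rw [← G.card_neighborFinset_eq_degree, hnb,
                Finset.card_erase_of_mem (Finset.mem_univ _), Finset.card_univ]
            intro v
            rw [hreg v, ← hreg x, hx]
          ext a b
          simp only [SimpleGraph.top_adj]
          refine ⟨fun h => G.ne_of_adj h, fun hab => ?_⟩
          have h1 : G.neighborFinset a ⊆ Finset.univ.erase a := by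
            intro z hz
            rw [SimpleGraph.mem_neighborFinset] at hz
            exact Finset.mem_erase.2 ⟨(G.ne_of_adj hz).symm, Finset.mem_univ _⟩
          have h2 : (Finset.univ.erase a).card ≤ (G.neighborFinset a).card := by
            rw [G.card_neighborFinset_eq_degree, hdeg a,
              Finset.card_erase_of_mem (Finset.mem_univ _), Finset.card_univ]
          have h3 : G.neighborFinset a = Finset.univ.erase a :=
            Finset.eq_of_subset_of_card_le h1 h2
          have h4 : b ∈ Finset.univ.erase a := Finset.mem_erase.2 ⟨hab.symm, Finset.mem_univ _⟩
          rw [← h3, SimpleGraph.mem_neighborFinset] at h4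
          exact h4
        obtain ⟨a, b, c, h1, h2, h3, h4, h5⟩ := exists_triple G hconn hcut
          (fun z => by rw [hreg z]; omega) hnd
        exact colorable_of_triple G (fun v => G.degree_le_maxDegree v) h1 h2 h3 h4 h5
      · -- there is a cutvertex
        push_neg at hcut
        obtain ⟨x, u, v, hux, hvx, hsep⟩ := hcut
        exact colorable_of_cutvertex G hconn (fun v => G.degree_le_maxDegree v) hux hvx hsep
  · -- the non-regular case
    push_neg at hreg
    obtain ⟨x, hx⟩ := hreg
    exact colorable_of_exists_small G hconn (fun v => G.degree_le_maxDegree v)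
      (lt_of_le_of_ne (G.degree_le_maxDegree x) hx)


end Brooks

theorem stmt_5 {V : Type*} [Fintype V] [DecidableEq V]
    (G : SimpleGraph V) [DecidableRel G.Adj] (hconn : G.Connected)
    (hnotcomplete : G ≠ ⊤)
    (hnotoddcycle : ¬ ∃ m : ℕ, Odd m ∧ 3 ≤ m ∧ Nonempty (G ≃g SimpleGraph.cycleGraph m)) :
    G.chromaticNumber ≤ G.maxDegree := by
  rw [SimpleGraph.chromaticNumber_le_iff_colorable]
  exact Brooks.brooks_colorable G hconn hnotcomplete hnotoddcycle
end

section
/- Let n ≥ 1 and k ≥ 1. Every graph G on n vertices with δ(G) ≥ ⌊n/(k+1)⌋ contains a path on at least t vertices whenever n > (t-1)k, for any integer t ≥ 1. -/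
open SimpleGraph Finset

section Helpers

variable {V : Type*} {G : SimpleGraph V}

private lemma dart_split {d : G.Dart} :
    ∀ {u v : V} (p : G.Walk u v), d ∈ p.darts →
    ∃ (q : G.Walk u d.fst) (r : G.Walk d.snd v),
      p.support = q.support ++ r.support ∧ p.length = q.length + r.length + 1 := by
  intro u v p
  induction p with
  | nil => simp
  | cons h p ih =>
    intro hd
    rw [SimpleGraph.Walk.darts_cons, List.mem_cons] at hd
    rcases hd with hd | hd
    · subst hd
      exact ⟨SimpleGraph.Walk.nil, p, by simp, by simp⟩
    · obtain ⟨q, r, hs, hl⟩ := ih hd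
      refine ⟨SimpleGraph.Walk.cons h q, r, by simp [hs], by simp [hl]; omega⟩

private lemma aux_cyc {w x : V} (c : G.Walk w w)
    (hnd : c.support.tail.Nodup) (hx : x ∉ c.support) (hadj : G.Adj x w) :
    ∃ (z : V) (r : G.Walk x z), r.IsPath ∧ r.length = c.length := by
  cases c with
  | nil => exact ⟨x, SimpleGraph.Walk.nil, SimpleGraph.Walk.IsPath.nil, rfl⟩
  | cons h' q' =>
    have hq' : q'.IsPath := SimpleGraph.Walk.IsPath.mk' (by simpa using hnd)
    refine ⟨_, SimpleGraph.Walk.cons hadj q'.reverse, ?_, by simp⟩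
    refine hq'.reverse.cons ?_
    rw [SimpleGraph.Walk.support_reverse, List.mem_reverse]
    intro hxx
    exact hx (by simp [hxx])

private lemma length_rotate [DecidableEq V] {u v : V} (c : G.Walk v v) (h : u ∈ c.support) :
    (c.rotate u h).length = c.length := by
  have h2 := congrArg SimpleGraph.Walk.length (c.take_spec h)
  rw [SimpleGraph.Walk.length_append] at h2
  show ((c.dropUntil u h).append (c.takeUntil u h)).length = c.length
  rw [SimpleGraph.Walk.length_append]
  omega

private lemma arith {n k q s : ℕ} (hk : 1 ≤ k) (hq : 1 ≤ q)
    (hqn : (k + 1) * q ≤ n) (hn : n < (k + 1) * (q + 1)) (hs : s * k < n) :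
    s ≤ 2 * q := by
  by_contra h
  push_neg at h
  have e1 : (2 * q + 1) * k ≤ s * k := Nat.mul_le_mul_right _ h
  nlinarith

end Helpers

theorem stmt_17 {V : Type*} [Fintype V] [DecidableEq V]
    (G : SimpleGraph V) [DecidableRel G.Adj] (n k : ℕ) (hn : 1 ≤ n) (hk : 1 ≤ k)
    (hcard : Fintype.card V = n)
    (hdeg : G.minDegree ≥ n / (k + 1)) :
    ∀ t : ℕ, 1 ≤ t → (t - 1) * k < n →
      ∃ (u v : V) (p : G.Walk u v), p.IsPath ∧ t ≤ p.length + 1 := by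
  classical
  intro t ht htk
  have hVne : Nonempty V := Fintype.card_pos_iff.mp (by omega)
  -- trivial case t = 1
  rcases Nat.lt_or_ge t 2 with ht1 | ht2
  · obtain ⟨x⟩ := hVne
    exact ⟨x, x, SimpleGraph.Walk.nil, SimpleGraph.Walk.IsPath.nil, by omega⟩
  -- now t ≥ 2, so n ≥ k + 1
  have hnk : k + 1 ≤ n := by
    by_contra hcon
    push_neg at hcon
    have : k ≤ (t - 1) * k := Nat.le_mul_of_pos_left k (by omega)
    omega
  set q : ℕ := n / (k + 1) with hqdef
  have hq1 : 1 ≤ q := (Nat.one_le_div_iff (by omega)).mpr hnk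
  have hqn : (k + 1) * q ≤ n := by
    rw [hqdef]
    have := Nat.div_add_mod n (k + 1); omega
  have hnq : n < (k + 1) * (q + 1) := by
    rw [hqdef, Nat.mul_succ]
    have h1 := Nat.div_add_mod n (k + 1)
    have h2 : n % (k + 1) < k + 1 := Nat.mod_lt n (by omega)
    omega
  have harith : t - 1 ≤ 2 * q := arith hk hq1 hqn hnq htk
  -- component counting
  have : Fintype G.ConnectedComponent := Fintype.ofFinite _
  set F : G.ConnectedComponent → Finset V :=
    fun C => Finset.univ.filter (fun x => G.connectedComponentMk x = C) with hF
  have hsum : ∑ C : G.ConnectedComponent, (F C).card = n := by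
    rw [← hcard, ← Finset.card_univ]
    exact (Finset.card_eq_sum_card_fiberwise (fun x _ => Finset.mem_univ _)).symm
  have hFlb : ∀ C, q + 1 ≤ (F C).card := by
    intro C
    induction C using SimpleGraph.ConnectedComponent.ind with
    | _ x =>
    have hsub : insert x (G.neighborFinset x) ⊆ F (G.connectedComponentMk x) := by
      intro y hy
      rw [Finset.mem_insert, SimpleGraph.mem_neighborFinset] at hy
      simp only [hF, Finset.mem_filter, Finset.mem_univ, true_and]
      rcases hy with rfl | hy
      · rfl
      · exact SimpleGraph.ConnectedComponent.eq.mpr hy.reachable.symm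
    calc q + 1 ≤ G.degree x + 1 := by
          have := G.minDegree_le_degree x; omega
      _ = (insert x (G.neighborFinset x)).card := by
          rw [Finset.card_insert_of_notMem (by simp), G.card_neighborFinset_eq_degree]
      _ ≤ (F (G.connectedComponentMk x)).card := Finset.card_le_card hsub
  have hnc : Fintype.card G.ConnectedComponent ≤ k := by
    by_contra hcon
    push_neg at hcon
    have h1 : Fintype.card G.ConnectedComponent * (q + 1) ≤ n := by
      calc Fintype.card G.ConnectedComponent * (q + 1)
          = ∑ _C : G.ConnectedComponent, (q + 1) := by
            rw [Finset.sum_const, smul_eq_mul, Finset.card_univ]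
        _ ≤ ∑ C : G.ConnectedComponent, (F C).card := Finset.sum_le_sum (fun C _ => hFlb C)
        _ = n := hsum
    have h2 : (k + 1) * (q + 1) ≤ Fintype.card G.ConnectedComponent * (q + 1) :=
      Nat.mul_le_mul_right _ hcon
    omega
  -- find a big component
  have hbig : ∃ C, t ≤ (F C).card := by
    by_contra hcon
    push_neg at hcon
    have : n ≤ Fintype.card G.ConnectedComponent * (t - 1) := by
      rw [← hsum, ← Finset.card_univ]
      calc ∑ C : G.ConnectedComponent, (F C).card
          ≤ ∑ _C : G.ConnectedComponent, (t - 1) :=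
            Finset.sum_le_sum (fun C _ => by have := hcon C; omega)
        _ = Finset.univ.card * (t - 1) := by rw [Finset.sum_const, smul_eq_mul]
    have h5 : Fintype.card G.ConnectedComponent * (t - 1) ≤ (t - 1) * k := by
      rw [mul_comm]; exact Nat.mul_le_mul_left _ hnc
    omega
  obtain ⟨C, hC⟩ := hbig
  -- maximal path inside C
  set P : ℕ → Prop := fun m => ∃ (a b : V) (w : G.Walk a b),
    w.IsPath ∧ G.connectedComponentMk a = C ∧ w.length = m with hPdef
  obtain ⟨x0, hx0⟩ : ∃ x, x ∈ F C := (Finset.card_pos.mp (by omega)).imp (fun _ h => h)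
  have hx0C : G.connectedComponentMk x0 = C := by
    simpa [hF] using hx0
  have hP0 : P 0 := ⟨x0, x0, SimpleGraph.Walk.nil, SimpleGraph.Walk.IsPath.nil, hx0C, rfl⟩
  set l : ℕ := Nat.findGreatest P (n - 1) with hldef
  have hPl : P l := Nat.findGreatest_spec (Nat.zero_le _) hP0
  have hmax : ∀ m, P m → m ≤ l := by
    intro m hm
    by_contra hcon
    push_neg at hcon
    obtain ⟨a, b, w, hw, -, hwl⟩ := id hm
    have hmn : m ≤ n - 1 := by
      have := hw.length_lt; omega
    exact Nat.findGreatest_is_greatest hcon hmn hm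
  obtain ⟨u, v, p, hp, hpc, hpl⟩ := hPl
  suffices htl : t ≤ l + 1 by
    exact ⟨u, v, p, hp, by omega⟩
  by_contra hlt
  push_neg at hlt
  -- neighbors of the endpoints lie on p
  have hsupC : ∀ w ∈ p.support, G.connectedComponentMk w = C := by
    intro w hw
    rw [← hpc]
    exact SimpleGraph.ConnectedComponent.eq.mpr (p.takeUntil w hw).reverse.reachable
  have hu_nb : ∀ y, G.Adj u y → y ∈ p.support := by
    intro y hy
    by_contra hys
    have hyC : G.connectedComponentMk y = C := by
      rw [← hpc]; exact SimpleGraph.ConnectedComponent.eq.mpr hy.symm.reachable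
    have := hmax (l + 1) ⟨y, v, SimpleGraph.Walk.cons hy.symm p, hp.cons hys, hyC, by
      simp [hpl]⟩
    omega
  have hv_nb : ∀ y, G.Adj v y → y ∈ p.support := by
    intro y hy
    by_contra hys
    have hyC : G.connectedComponentMk y = C := by
      rw [← hsupC v p.end_mem_support]
      exact SimpleGraph.ConnectedComponent.eq.mpr hy.symm.reachable
    have := hmax (l + 1) ⟨y, u, SimpleGraph.Walk.cons hy.symm p.reverse,
      hp.reverse.cons (by rwa [SimpleGraph.Walk.support_reverse, List.mem_reverse]), hyC, by
      simp [hpl]⟩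
    omega
  -- the crossing dart
  have hdnodup : p.darts.Nodup := by
    have h1 : (p.darts.map (·.snd)).Nodup := by
      rw [SimpleGraph.Walk.map_snd_darts]
      exact hp.support_nodup.tail
    exact h1.of_map _
  have hcardD : p.darts.toFinset.card = l := by
    rw [List.toFinset_card_of_nodup hdnodup, SimpleGraph.Walk.length_darts, hpl]
  set A : Finset G.Dart := p.darts.toFinset.filter (fun d => G.Adj u d.snd) with hA
  set B : Finset G.Dart := p.darts.toFinset.filter (fun d => G.Adj v d.fst) with hB
  have hcardA : q ≤ A.card := by
    have hsurj : Set.SurjOn (fun d : G.Dart => d.snd) ↑A ↑(G.neighborFinset u) := by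
      intro w hw
      rw [Finset.mem_coe, SimpleGraph.mem_neighborFinset] at hw
      have hwsup : w ∈ p.support := hu_nb w hw
      have hwne : w ≠ u := hw.ne'
      have hwtail : w ∈ p.support.tail := by
        rw [p.support_eq_cons] at hwsup
        rcases hwsup with _ | h
        · exact absurd rfl hwne
        · assumption
      rw [← SimpleGraph.Walk.map_snd_darts, List.mem_map] at hwtail
      obtain ⟨d, hd, hds⟩ := hwtail
      refine ⟨d, ?_, hds⟩
      simp only [hA, Finset.coe_filter, Set.mem_setOf_eq, List.mem_toFinset]
      exact ⟨hd, hds ▸ hw⟩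
    calc q ≤ G.minDegree := hdeg
      _ ≤ G.degree u := G.minDegree_le_degree u
      _ = (G.neighborFinset u).card := (G.card_neighborFinset_eq_degree u).symm
      _ ≤ A.card := Finset.card_le_card_of_surjOn _ hsurj
  have hcardB : q ≤ B.card := by
    have hsurj : Set.SurjOn (fun d : G.Dart => d.fst) ↑B ↑(G.neighborFinset v) := by
      intro w hw
      rw [Finset.mem_coe, SimpleGraph.mem_neighborFinset] at hw
      have hwsup : w ∈ p.support := hv_nb w hw
      have hwne : w ≠ v := hw.ne'
      have hwdl : w ∈ p.darts.map (·.fst) := by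
        have hap := p.map_fst_darts_append
        have : w ∈ p.darts.map (·.fst) ++ [v] := by rw [hap]; exact hwsup
        rcases List.mem_append.mp this with h | h
        · exact h
        · simp at h; exact absurd h hwne
      rw [List.mem_map] at hwdl
      obtain ⟨d, hd, hds⟩ := hwdl
      refine ⟨d, ?_, hds⟩
      simp only [hB, Finset.coe_filter, Set.mem_setOf_eq, List.mem_toFinset]
      exact ⟨hd, hds ▸ hw⟩
    calc q ≤ G.minDegree := hdeg
      _ ≤ G.degree v := G.minDegree_le_degree v
      _ = (G.neighborFinset v).card := (G.card_neighborFinset_eq_degree v).symm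
      _ ≤ B.card := Finset.card_le_card_of_surjOn _ hsurj
  have hABne : (A ∩ B).Nonempty := by
    rw [← Finset.card_pos]
    have h1 : (A ∪ B).card + (A ∩ B).card = A.card + B.card :=
      Finset.card_union_add_card_inter A B
    have h2 : (A ∪ B).card ≤ l := by
      rw [← hcardD]
      exact Finset.card_le_card (Finset.union_subset (Finset.filter_subset _ _)
        (Finset.filter_subset _ _))
    omega
  obtain ⟨d, hd⟩ := hABne
  rw [Finset.mem_inter, hA, hB, Finset.mem_filter, Finset.mem_filter,
    List.mem_toFinset] at hd
  obtain ⟨⟨hddarts, hdu⟩, -, hdv⟩ := hd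
  -- build the "cycle" walk c : u → u covering p.support
  obtain ⟨q1, r1, hsupp, hlen⟩ := dart_split p hddarts
  set c : G.Walk u u :=
    SimpleGraph.Walk.cons hdu (r1.append (SimpleGraph.Walk.cons hdv q1.reverse)) with hc
  have hclen : c.length = l + 1 := by
    simp only [hc, SimpleGraph.Walk.length_cons, SimpleGraph.Walk.length_append,
      SimpleGraph.Walk.length_reverse]
    omega
  have hctail : c.support.tail = r1.support ++ q1.support.reverse := by
    simp [hc, SimpleGraph.Walk.support_append, SimpleGraph.Walk.support_reverse]
  have hpnodup := hp.support_nodup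
  rw [hsupp, List.nodup_append] at hpnodup
  obtain ⟨hq1nd, hr1nd, hdisj⟩ := hpnodup
  have hctnd : c.support.tail.Nodup := by
    rw [hctail, List.nodup_append]
    refine ⟨hr1nd, List.nodup_reverse.mpr hq1nd, ?_⟩
    intro a ha b hb
    exact (hdisj b (List.mem_reverse.mp hb) a ha).symm
  have hsub2 : ∀ z ∈ p.support, z ∈ c.support := by
    intro z hz
    rw [hsupp, List.mem_append] at hz
    have : c.support = u :: (r1.support ++ q1.support.reverse) := by
      rw [← hctail]; exact c.support_eq_cons
    rw [this, List.mem_cons, List.mem_append, List.mem_reverse]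
    tauto
  have hsub1 : ∀ z ∈ c.support, z ∈ p.support := by
    intro z hz
    have hcs : c.support = u :: (r1.support ++ q1.support.reverse) := by
      rw [← hctail]; exact c.support_eq_cons
    rw [hcs, List.mem_cons, List.mem_append, List.mem_reverse] at hz
    rw [hsupp, List.mem_append]
    rcases hz with rfl | hz | hz
    · left; exact q1.start_mem_support
    · right; exact hz
    · left; exact hz
  -- closure of the support under adjacency
  have hclosed : ∀ w ∈ p.support, ∀ x, G.Adj w x → x ∈ p.support := by
    intro w hw x hadj
    by_contra hx
    have hwc : w ∈ c.support := hsub2 w hw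
    set c' : G.Walk w w := c.rotate w hwc with hc'
    have hrot : (c.rotate w hwc).support.tail ~r c.support.tail :=
      SimpleGraph.Walk.support_rotate c w hwc
    have hnd' : c'.support.tail.Nodup := by
      rw [hc', (List.IsRotated.nodup_iff hrot)]
      exact hctnd
    have hx' : x ∉ c'.support := by
      rw [c'.support_eq_cons, List.mem_cons]
      rintro (rfl | hxx)
      · exact hadj.ne rfl
      · rw [hc'] at hxx
        have : x ∈ c.support.tail := hrot.mem_iff.mp hxx
        exact hx (hsub1 x (List.mem_of_mem_tail this))
    obtain ⟨z, r, hrp, hrl⟩ := aux_cyc c' hnd' hx' hadj.symm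
    have hrl' : r.length = l + 1 := by
      rw [hrl, hc', length_rotate, hclen]
    have hxC : G.connectedComponentMk x = C := by
      rw [← hsupC w hw]
      exact SimpleGraph.ConnectedComponent.eq.mpr hadj.symm.reachable
    have := hmax (l + 1) ⟨x, z, r, hrp, hxC, hrl'⟩
    omega
  -- the whole component is inside the support
  have hkey : ∀ (a b : V) (W : G.Walk a b), a ∈ p.support → b ∈ p.support := by
    intro a b W
    induction W with
    | nil => exact id
    | cons h W ih => exact fun ha => ih (hclosed _ ha _ h)
  have hCsub : F C ⊆ p.support.toFinset := by
    intro y hy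
    have hyC : G.connectedComponentMk y = C := by simpa [hF] using hy
    have hreach : G.Reachable u y := SimpleGraph.ConnectedComponent.exact (hpc.trans hyC.symm)
    obtain ⟨W⟩ := hreach
    rw [List.mem_toFinset]
    exact hkey u y W p.start_mem_support
  have hfin : t ≤ l + 1 := by
    calc t ≤ (F C).card := hC
      _ ≤ p.support.toFinset.card := Finset.card_le_card hCsub
      _ = p.support.length := List.toFinset_card_of_nodup hp.support_nodup
      _ = l + 1 := by rw [SimpleGraph.Walk.length_support, hpl]
  omega
end
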